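/- arXiv:2312.05511 — 6 statements merged into one kernel-verified Lean document; each statement's English description precedes it below -/
import Mathlib

section
/- (Modified inf-sup condition for stabilized subspaces.) Let V and Q be real normed spaces and b : Q × V → ℝ a bilinear form satisfying the inf-sup condition: there is β > 0 with β ‖r‖_Q ≤ sup_{v ∈ V, v ≠ 0} |b(r, v)| / ‖v‖_V for all r ∈ Q. Let V_h ⊆ V and Q_h ⊆ Q be subspaces with V_h ≠ {0}, let |·|_j be a seminorm on Q_h, and let I_h : V → V_h be a linear map for which there are constants C_I ≥ 0 and C_b ≥ 0 such that ‖I_h v‖_V ≤ C_I ‖v‖_V for all v ∈ V and |b(r_h, v − I_h v)| ≤ C_b |r_h|_j ‖v‖_V for all v ∈ V and r_h ∈ Q_h. Then for every r_h ∈ Q_h: β ‖r_h‖_Q ≤ C_I sup_{v_h ∈ V_h, v_h ≠ 0} |b(r_h, v_h)| / ‖v_h‖_V + C_b |r_h|_j. -/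
/-- Modified inf-sup condition for stabilized subspaces. Here the statement
`β ‖r‖_Q ≤ sup_{v ≠ 0} |b(r,v)|/‖v‖_V` is encoded equivalently as: every upper bound `c`
of the set `{|b(r,v)|/‖v‖_V : v ≠ 0}` satisfies `β ‖r‖_Q ≤ c` (and similarly for the
conclusion `β ‖r_h‖_Q ≤ C_I · sup_{v_h ∈ V_h, v_h ≠ 0} |b(r_h,v_h)|/‖v_h‖_V + C_b |r_h|_j`). -/
theorem modified_inf_sup_condition
    {V Q : Type*} [NormedAddCommGroup V] [NormedSpace ℝ V]
    [NormedAddCommGroup Q] [NormedSpace ℝ Q]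
    (b : Q →ₗ[ℝ] V →ₗ[ℝ] ℝ)
    (β : ℝ) (hβ : 0 < β)
    (hinfsup : ∀ r : Q, ∀ c : ℝ, (∀ v : V, v ≠ 0 → |b r v| / ‖v‖ ≤ c) → β * ‖r‖ ≤ c)
    (Vh : Submodule ℝ V) (Qh : Submodule ℝ Q) (hVh : Vh ≠ ⊥)
    (jh : Seminorm ℝ Qh)
    (Ih : V →ₗ[ℝ] Vh)
    (CI Cb : ℝ) (hCI : 0 ≤ CI) (hCb : 0 ≤ Cb)
    (hIh : ∀ v : V, ‖(Ih v : V)‖ ≤ CI * ‖v‖)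
    (hjb : ∀ (rh : Qh) (v : V), |b (rh : Q) (v - (Ih v : V))| ≤ Cb * jh rh * ‖v‖) :
    ∀ rh : Qh, ∀ c : ℝ,
      (∀ vh : Vh, vh ≠ 0 → |b (rh : Q) (vh : V)| / ‖(vh : V)‖ ≤ c) →
      β * ‖(rh : Q)‖ ≤ CI * c + Cb * jh rh := by
  intro rh c hc
  -- c is nonnegative since Vh ≠ ⊥
  obtain ⟨w, hw⟩ : ∃ w : Vh, w ≠ 0 := by
    rcases Submodule.exists_mem_ne_zero_of_ne_bot hVh with ⟨x, hx, hx0⟩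
    exact ⟨⟨x, hx⟩, by simpa [Submodule.mk_eq_zero] using hx0⟩
  have hc0 : 0 ≤ c :=
    le_trans (div_nonneg (abs_nonneg _) (norm_nonneg _)) (hc w hw)
  apply hinfsup
  intro v hv
  have hvn : 0 < ‖v‖ := norm_pos_iff.mpr hv
  rw [div_le_iff₀ hvn]
  have h1 : |b (rh : Q) ((Ih v : V))| ≤ c * ‖(Ih v : V)‖ := by
    by_cases h : Ih v = 0
    · simp [h]
    · have := hc (Ih v) h
      rwa [div_le_iff₀ (norm_pos_iff.mpr (by
        simpa [Submodule.coe_eq_zero] using h))] at this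
  have h2 := hjb rh v
  have key : b (rh : Q) v = b (rh : Q) ((Ih v : V)) + b (rh : Q) (v - (Ih v : V)) := by
    rw [← map_add]; congr 1; abel
  calc |b (rh : Q) v| ≤ |b (rh : Q) ((Ih v : V))| + |b (rh : Q) (v - (Ih v : V))| := by
        rw [key]; exact abs_add_le _ _
    _ ≤ c * ‖(Ih v : V)‖ + Cb * jh rh * ‖v‖ := add_le_add h1 h2
    _ ≤ c * (CI * ‖v‖) + Cb * jh rh * ‖v‖ := by
        gcongr
        exact hIh v
    _ = (CI * c + Cb * jh rh) * ‖v‖ := by ring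
end

section
/- (A priori stability of the stabilized Ritz projection.) Let V be a real inner product space with inner product a(·,·) and norm ‖v‖_V = a(v,v)^{1/2}, let Q be a real normed space, and let b : Q × V → ℝ be bilinear with |b(r, v)| ≤ C_b ‖r‖_Q ‖v‖_V for all r ∈ Q, v ∈ V. Let V_h ⊆ V and Q_h ⊆ Q be subspaces and let j : Q_h × Q_h → ℝ be a symmetric positive semidefinite bilinear form. Suppose (u, p) ∈ V × Q and (S_u, S_p) ∈ V_h × Q_h satisfy a(S_u, v_h) + b(S_p, v_h) = a(u, v_h) + b(p, v_h) for all v_h ∈ V_h and b(r_h, S_u) = j(S_p, r_h) for all r_h ∈ Q_h. Then ‖S_u‖_V² + j(S_p, S_p) ≤ 2 ‖u‖_V² + 2 C_b² ‖p‖_Q². -/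
open scoped RealInnerProductSpace

/-- A priori stability of the stabilized (Stokes) Ritz projection. `V` is a
real inner product space with inner product `a(u,v) = ⟪u,v⟫` and norm `‖v‖_V = a(v,v)^{1/2}`,
`Q` a real normed space, `b` a bounded bilinear form, `V_h ⊆ V`, `Q_h ⊆ Q` subspaces, and
`j` a symmetric positive semidefinite bilinear form on `Q_h`. If `(S_u, S_p) ∈ V_h × Q_h`
is the Ritz projection of `(u, p)`, then `‖S_u‖_V² + j(S_p, S_p) ≤ 2‖u‖_V² + 2 C_b² ‖p‖_Q².` -/
theorem ritz_projection_stability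
    {V : Type*} [NormedAddCommGroup V] [InnerProductSpace ℝ V]
    {Q : Type*} [NormedAddCommGroup Q] [NormedSpace ℝ Q]
    (b : Q →ₗ[ℝ] V →ₗ[ℝ] ℝ) (Cb : ℝ)
    (hb : ∀ (r : Q) (v : V), |b r v| ≤ Cb * ‖r‖ * ‖v‖)
    (Vh : Submodule ℝ V) (Qh : Submodule ℝ Q)
    (j : Qh →ₗ[ℝ] Qh →ₗ[ℝ] ℝ)
    (hj_symm : ∀ r s : Qh, j r s = j s r)
    (hj_psd : ∀ r : Qh, 0 ≤ j r r)
    (u : V) (p : Q) (Su : Vh) (Sp : Qh)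
    (hRitz1 : ∀ vh : Vh,
      ⟪(Su : V), (vh : V)⟫ + b (Sp : Q) (vh : V) = ⟪u, (vh : V)⟫ + b p (vh : V))
    (hRitz2 : ∀ rh : Qh, b (rh : Q) (Su : V) = j Sp rh) :
    ‖(Su : V)‖ ^ 2 + j Sp Sp ≤ 2 * ‖u‖ ^ 2 + 2 * Cb ^ 2 * ‖p‖ ^ 2 := by
  have h1 := hRitz1 Su
  have h2 := hRitz2 Sp
  have hself : ⟪(Su : V), (Su : V)⟫ = ‖(Su : V)‖ ^ 2 := real_inner_self_eq_norm_sq _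
  have hinner : ⟪u, (Su : V)⟫ ≤ ‖u‖ * ‖(Su : V)‖ := real_inner_le_norm _ _
  have hbb : b p (Su : V) ≤ Cb * ‖p‖ * ‖(Su : V)‖ := (abs_le.mp (hb p Su)).2
  have hj := hj_psd Sp
  have h3 : 0 ≤ ‖(Su : V)‖ := norm_nonneg _
  have h4 : 0 ≤ ‖u‖ := norm_nonneg _
  have h5 : 0 ≤ ‖p‖ := norm_nonneg _
  nlinarith [sq_nonneg (‖u‖ + Cb * ‖p‖ - ‖(Su : V)‖), sq_nonneg (‖u‖ - Cb * ‖p‖)]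
end

section
/- (Velocity and pressure-seminorm stability for the six-step BDF method.) Let q = 6. There exists a constant C > 0 (absolute) such that for every abstract fully discrete Stokes setting, every time step τ > 0, every integer N ≥ 6, all data f^6, …, f^N ∈ H, all starting values u^0, …, u^5 ∈ V_h, and every fully discrete solution (u^n, p^n)_{n=6}^N: ‖u^N‖_H² + τ ∑_{n=6}^N ‖u^n‖_V² + τ ∑_{n=6}^N |p^n|_j² ≤ C [ ∑_{i=0}^{5} ‖u^i‖_H² + (c_P²/ν) τ ∑_{n=6}^N ‖f^n‖_H² ]. -/
/-!
Energy technique with a multiplier. Write `δ` for the BDF6 difference and test the momentum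
equation at step `n` with `μ(u)ⁿ = uⁿ - 5/4 uⁿ⁻¹ + 4/5 uⁿ⁻² - 1/3 uⁿ⁻³`. Dahlquist's G-stability
theory for the pair `(δ, μ)` yields a positive definite quadratic form `|·|_G²` of six consecutive
velocities with `2⟨δ(u)ⁿ, μ(u)ⁿ⟩ ≥ |Uⁿ|_G² - |Uⁿ⁻¹|_G²`, and since `Re μ(e^{iθ}) > 1/10` the terms
`a(uⁿ, μ(u)ⁿ)` and `j(pⁿ, μ(p)ⁿ)` dominate a tenth of `‖uⁿ‖_V²`, resp. `|pⁿ|_j²`, up to a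
telescoping difference. The constraint turns `b(pⁿ, μ(u)ⁿ)` into `j(pⁿ, μ(p)ⁿ)`; it only holds
for indices `≥ 6`, so the multiplier is used from `n = 9` on, while the steps `n = 6, 7, 8` are
estimated crudely by testing with `uⁿ`. The data term is handled by Young's and Poincaré's
inequalities, and all the inequalities between explicit quadratic forms are verified by
sum-of-squares certificates.
-/

open scoped RealInnerProductSpace

noncomputable def bdfCoeff (q i : ℕ) : ℝ :=
  (∑ l ∈ Finset.Icc 1 q, Polynomial.C ((l : ℝ)⁻¹) * (1 - Polynomial.X) ^ l).coeff i

open Finset Polynomial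
open LinearMap (BilinForm)

theorem Polynomial.coeff_one_sub_X_pow {R : Type*} [CommRing R] (l k : ℕ) :
    ((1 - X : R[X]) ^ l).coeff k = (-1) ^ k * l.choose k := by
  rw [show (1 - X : R[X]) = C (-1) * (X + C (-1)) by simp; ring, mul_pow, ← C_pow, coeff_C_mul,
    coeff_X_add_C_pow]
  rcases le_or_gt k l with hkl | hlk
  · obtain ⟨d, rfl⟩ := Nat.exists_eq_add_of_le hkl
    rw [Nat.add_sub_cancel_left, pow_add, ← mul_assoc, mul_assoc ((-1) ^ k), ← pow_add, ← two_mul,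
      pow_mul, neg_one_sq, one_pow, mul_one]
  · simp [Nat.choose_eq_zero_of_lt hlk]

theorem bdfCoeff_eq_sum_choose (q i : ℕ) :
    bdfCoeff q i = (-1) ^ i * ∑ l ∈ Icc 1 q, (l.choose i : ℝ) / l := by
  simp only [bdfCoeff, finsetSum_coeff, coeff_C_mul, coeff_one_sub_X_pow, mul_sum]
  exact sum_congr rfl fun l _ => by ring

noncomputable def bdfDiff {M : Type*} [AddCommGroup M] [Module ℝ M] (q : ℕ) (u : ℕ → M)
    (n : ℕ) : M :=
  ∑ i ∈ range (q + 1), bdfCoeff q i • u (n - i)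

theorem mul_sqrt_le_mul_sq_add_div (φ : ℝ) {x c : ℝ} (hx : 0 ≤ x) (hc : 0 < c) :
    φ * √x ≤ c * φ ^ 2 + x / (4 * c) := by
  have h : c * φ ^ 2 + x / (4 * c) - φ * √x = (2 * c * φ - √x) ^ 2 / (4 * c) := by
    field_simp
    linear_combination (-1 : ℝ) * Real.sq_sqrt hx
  have : 0 ≤ (2 * c * φ - √x) ^ 2 / (4 * c) := by positivity
  linarith

theorem add_sum_Ioc_le_add_sum_Ioc {α : Type*} [AddCommMonoid α] [PartialOrder α]
    [IsOrderedAddMonoid α] {E D F : ℕ → α} {m N : ℕ} (hmN : m ≤ N)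
    (h : ∀ n, m ≤ n → n < N → E (n + 1) + D (n + 1) ≤ E n + F (n + 1)) :
    E N + ∑ n ∈ Ioc m N, D n ≤ E m + ∑ n ∈ Ioc m N, F n := by
  induction N, hmN using Nat.le_induction with
  | base => simp
  | succ N hmN ih =>
    rw [sum_Ioc_succ_top hmN, sum_Ioc_succ_top hmN]
    calc E (N + 1) + (∑ n ∈ Ioc m N, D n + D (N + 1))
        = (E (N + 1) + D (N + 1)) + ∑ n ∈ Ioc m N, D n := by abel
      _ ≤ (E N + F (N + 1)) + ∑ n ∈ Ioc m N, D n := add_le_add (h N hmN (by omega)) le_rfl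
      _ = (E N + ∑ n ∈ Ioc m N, D n) + F (N + 1) := by abel
      _ ≤ (E m + ∑ n ∈ Ioc m N, F n) + F (N + 1) :=
        add_le_add (ih fun n h1 h2 => h n h1 (by omega)) le_rfl
      _ = E m + (∑ n ∈ Ioc m N, F n + F (N + 1)) := by abel

section InnerRestrict

variable {H : Type*} [NormedAddCommGroup H] [InnerProductSpace ℝ H] {V : Submodule ℝ H}

theorem restrict_innerₗ_apply (v w : V) : BilinForm.restrict (innerₗ H) V v w = ⟪(v : H), w⟫ :=
  rfl

theorem isPosSemidef_restrict_innerₗ (V : Submodule ℝ H) :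
    (BilinForm.restrict (innerₗ H) V).IsPosSemidef :=
  ⟨⟨fun _ _ => real_inner_comm _ _⟩, ⟨fun _ => real_inner_self_nonneg⟩⟩

end InnerRestrict

namespace BDF6

variable {M : Type*} [AddCommGroup M] [Module ℝ M]

noncomputable section

/-- `|(v₁, …, v₆)|_G²` for the G-matrix of the pair `(δ, μ)`. -/
def gNormSq (B : BilinForm ℝ M) (v₁ v₂ v₃ v₄ v₅ v₆ : M) : ℝ :=
  61/720 * B v₁ v₁ - 7/24 * B v₁ v₂ + 5/8 * B v₁ v₃ - 37/45 * B v₁ v₄ + 37/60 * B v₁ v₅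
    - 133/360 * B v₁ v₆ + 1333/1800 * B v₂ v₂ - 1291/360 * B v₂ v₃ + 193/40 * B v₂ v₄
    - 81/20 * B v₂ v₅ + 149/72 * B v₂ v₆ + 3061/600 * B v₃ v₃ - 1037/72 * B v₃ v₄
    + 4529/360 * B v₃ v₅ - 475/72 * B v₃ v₆ + 39211/3600 * B v₄ v₄ - 3583/180 * B v₄ v₅
    + 307/30 * B v₄ v₆ + 8909/900 * B v₅ v₅ - 476/45 * B v₅ v₆ + 1891/600 * B v₆ v₆

/-- The telescoping quadratic form coming from `Re μ(e^{iθ}) > 1/10`. -/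
def muNormSq (B : BilinForm ℝ M) (w₁ w₂ w₃ : M) : ℝ :=
  11/72 * B w₁ w₁ - 17/45 * B w₁ w₂ + 23/72 * B w₁ w₃ + 323/720 * B w₂ w₂ - 38/45 * B w₂ w₃
    + 481/720 * B w₃ w₃

def deltaComb (v₀ v₁ v₂ v₃ v₄ v₅ v₆ : M) : M :=
  (49/20 : ℝ) • v₆ - (6 : ℝ) • v₅ + (15/2 : ℝ) • v₄ - (20/3 : ℝ) • v₃ + (15/4 : ℝ) • v₂
    - (6/5 : ℝ) • v₁ + (1/6 : ℝ) • v₀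

def muComb (w₀ w₁ w₂ w₃ : M) : M :=
  w₃ - (5/4 : ℝ) • w₂ + (4/5 : ℝ) • w₁ - (1/3 : ℝ) • w₀

end

variable {B : BilinForm ℝ M}

/- Each inequality between quadratic forms below is proved by a sum-of-squares certificate: the
vectors `x` with `0 ≤ B x x` listed in the proof are the rows of an `LDLᵀ` factorization of the
coefficient matrix of the difference of the two sides (or, for the cruder bounds, the pairs
`vᵢ ± vⱼ` of AM-GM), and `linarith` recovers the weights. -/
theorem gNormSq_sub_gNormSq_le (hB : B.IsPosSemidef) (v₀ v₁ v₂ v₃ v₄ v₅ v₆ : M) :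
    gNormSq B v₁ v₂ v₃ v₄ v₅ v₆ - gNormSq B v₀ v₁ v₂ v₃ v₄ v₅
      ≤ 2 * B (deltaComb v₀ v₁ v₂ v₃ v₄ v₅ v₆) (muComb v₃ v₄ v₅ v₆) := by
  have h₀ := hB.isNonneg.nonneg (v₀ - (105/61 : ℝ) • v₁ + (225/61 : ℝ) • v₂ - (336/61 : ℝ) • v₃
    + (318/61 : ℝ) • v₄ - (283/61 : ℝ) • v₅ + (120/61 : ℝ) • v₆)
  have h₁ := hB.isNonneg.nonneg (v₁ - (243605/88896 : ℝ) • v₂ + (15525/3704 : ℝ) • v₃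
    - (99569/22224 : ℝ) • v₄ + (85085/22224 : ℝ) • v₅ - (159955/88896 : ℝ) • v₆)
  have h₂ := hB.isNonneg.nonneg (v₂ - (18397224/10788535 : ℝ) • v₃ + (17837356/10788535 : ℝ) • v₄
    - (16916092/10788535 : ℝ) • v₅ + (1337485/2157707 : ℝ) • v₆)
  have h₃ := hB.isNonneg.nonneg (v₃ - (582375691/484859599 : ℝ) • v₄
    + (373461397/484859599 : ℝ) • v₅ - (275945305/484859599 : ℝ) • v₆)
  have h₄ := hB.isNonneg.nonneg (v₄ - (1431390725/1691061824 : ℝ) • v₅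
    - (259671099/1691061824 : ℝ) • v₆)
  have h₅ := hB.isNonneg.nonneg (v₅ - v₆)
  have hs := hB.isSymm.eq
  simp only [gNormSq, deltaComb, muComb, map_add, map_sub, map_smul, LinearMap.add_apply,
    LinearMap.sub_apply, LinearMap.smul_apply, smul_eq_mul] at h₀ h₁ h₂ h₃ h₄ h₅ ⊢
  simp only [hs v₁ v₀, hs v₂ v₀, hs v₂ v₁, hs v₃ v₀, hs v₃ v₁, hs v₃ v₂, hs v₄ v₀, hs v₄ v₁,
    hs v₄ v₂, hs v₄ v₃, hs v₅ v₀, hs v₅ v₁, hs v₅ v₂, hs v₅ v₃, hs v₅ v₄, hs v₆ v₀, hs v₆ v₁,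
    hs v₆ v₂, hs v₆ v₃, hs v₆ v₄, hs v₆ v₅] at h₀ h₁ h₂ h₃ h₄ h₅ ⊢
  linarith

theorem le_gNormSq (hB : B.IsPosSemidef) (v₁ v₂ v₃ v₄ v₅ v₆ : M) :
    B v₆ v₆ / 100 ≤ gNormSq B v₁ v₂ v₃ v₄ v₅ v₆ := by
  have h₁ := hB.isNonneg.nonneg (v₁ - (105/61 : ℝ) • v₂ + (225/61 : ℝ) • v₃ - (296/61 : ℝ) • v₄
    + (222/61 : ℝ) • v₅ - (133/61 : ℝ) • v₆)
  have h₂ := hB.isNonneg.nonneg (v₂ - (275630/107501 : ℝ) • v₃ + (374385/107501 : ℝ) • v₄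
    - (328140/107501 : ℝ) • v₅ + (157400/107501 : ℝ) • v₆)
  have h₃ := hB.isNonneg.nonneg (v₃ - (508445875/282837341 : ℝ) • v₄
    + (511514195/282837341 : ℝ) • v₅ - (301672750/282837341 : ℝ) • v₆)
  have h₄ := hB.isNonneg.nonneg (v₄ - (892601236645/608823404621 : ℝ) • v₅
    + (328702370930/608823404621 : ℝ) • v₆)
  have h₅ := hB.isNonneg.nonneg (v₅ - (598046023266655/591792188646843 : ℝ) • v₆)
  have h₆ := hB.isNonneg.nonneg v₆
  have hs := hB.isSymm.eq
  simp only [gNormSq, map_add, map_sub, map_smul, LinearMap.add_apply,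
    LinearMap.sub_apply, LinearMap.smul_apply, smul_eq_mul] at h₁ h₂ h₃ h₄ h₅ ⊢
  simp only [hs v₂ v₁, hs v₃ v₁, hs v₃ v₂, hs v₄ v₁, hs v₄ v₂, hs v₄ v₃, hs v₅ v₁, hs v₅ v₂,
    hs v₅ v₃, hs v₅ v₄, hs v₆ v₁, hs v₆ v₂, hs v₆ v₃, hs v₆ v₄, hs v₆ v₅] at h₁ h₂ h₃ h₄ h₅ ⊢
  linarith

theorem gNormSq_le (hB : B.IsPosSemidef) (v₁ v₂ v₃ v₄ v₅ v₆ : M) :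
    gNormSq B v₁ v₂ v₃ v₄ v₅ v₆
      ≤ 36 * (B v₁ v₁ + B v₂ v₂ + B v₃ v₃ + B v₄ v₄ + B v₅ v₅ + B v₆ v₆) := by
  have h := hB.isNonneg.nonneg
  have h₁₂ := h (v₁ + v₂); have h₁₃ := h (v₁ - v₃); have h₁₄ := h (v₁ + v₄)
  have h₁₅ := h (v₁ - v₅); have h₁₆ := h (v₁ + v₆); have h₂₃ := h (v₂ + v₃)
  have h₂₄ := h (v₂ - v₄); have h₂₅ := h (v₂ + v₅); have h₂₆ := h (v₂ - v₆)
  have h₃₄ := h (v₃ + v₄); have h₃₅ := h (v₃ - v₅); have h₃₆ := h (v₃ + v₆)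
  have h₄₅ := h (v₄ + v₅); have h₄₆ := h (v₄ - v₆); have h₅₆ := h (v₅ + v₆)
  have hs := hB.isSymm.eq
  simp only [gNormSq, map_add, map_sub, LinearMap.add_apply, LinearMap.sub_apply]
    at h₁₂ h₁₃ h₁₄ h₁₅ h₁₆ h₂₃ h₂₄ h₂₅ h₂₆ h₃₄ h₃₅ h₃₆ h₄₅ h₄₆ h₅₆ ⊢
  simp only [hs v₂ v₁, hs v₃ v₁, hs v₃ v₂, hs v₄ v₁, hs v₄ v₂, hs v₄ v₃, hs v₅ v₁, hs v₅ v₂,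
    hs v₅ v₃, hs v₅ v₄, hs v₆ v₁, hs v₆ v₂, hs v₆ v₃, hs v₆ v₄, hs v₆ v₅]
    at h₁₂ h₁₃ h₁₄ h₁₅ h₁₆ h₂₃ h₂₄ h₂₅ h₂₆ h₃₄ h₃₅ h₃₆ h₄₅ h₄₆ h₅₆ ⊢
  linarith [h v₁, h v₂, h v₃, h v₄, h v₅, h v₆]

theorem muNormSq_sub_muNormSq_le (hB : B.IsPosSemidef) (w₀ w₁ w₂ w₃ : M) :
    B w₃ w₃ / 10 + muNormSq B w₁ w₂ w₃ - muNormSq B w₀ w₁ w₂ ≤ B w₃ (muComb w₀ w₁ w₂ w₃) := by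
  have h₀ := hB.isNonneg.nonneg (w₀ - (68/55 : ℝ) • w₁ + (23/22 : ℝ) • w₂ - (12/11 : ℝ) • w₃)
  have h₁ := hB.isNonneg.nonneg (w₁ - (1420/2467 : ℝ) • w₂ + (1355/2467 : ℝ) • w₃)
  have h₂ := hB.isNonneg.nonneg (w₂ - (31404/113047 : ℝ) • w₃)
  have h₃ := hB.isNonneg.nonneg w₃
  have hs := hB.isSymm.eq
  simp only [muNormSq, muComb, map_add, map_sub, map_smul, LinearMap.add_apply,
    LinearMap.sub_apply, LinearMap.smul_apply, smul_eq_mul] at h₀ h₁ h₂ ⊢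
  simp only [hs w₁ w₀, hs w₂ w₀, hs w₂ w₁, hs w₃ w₀, hs w₃ w₁, hs w₃ w₂] at h₀ h₁ h₂ ⊢
  linarith

theorem muNormSq_nonneg (hB : B.IsPosSemidef) (w₁ w₂ w₃ : M) : 0 ≤ muNormSq B w₁ w₂ w₃ := by
  have h₁ := hB.isNonneg.nonneg (w₁ - (68/55 : ℝ) • w₂ + (23/22 : ℝ) • w₃)
  have h₂ := hB.isNonneg.nonneg (w₂ - (8900/8517 : ℝ) • w₃)
  have h₃ := hB.isNonneg.nonneg w₃
  have hs := hB.isSymm.eq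
  simp only [muNormSq, map_add, map_sub, map_smul, LinearMap.add_apply,
    LinearMap.sub_apply, LinearMap.smul_apply, smul_eq_mul] at h₁ h₂ ⊢
  simp only [hs w₂ w₁, hs w₃ w₁, hs w₃ w₂] at h₁ h₂ ⊢
  linarith

theorem muNormSq_le (hB : B.IsPosSemidef) (w₁ w₂ w₃ : M) :
    muNormSq B w₁ w₂ w₃ ≤ 2 * (B w₁ w₁ + B w₂ w₂ + B w₃ w₃) := by
  have h := hB.isNonneg.nonneg
  have h₁₂ := h (w₁ + w₂); have h₁₃ := h (w₁ - w₃); have h₂₃ := h (w₂ + w₃)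
  have hs := hB.isSymm.eq
  simp only [muNormSq, map_add, map_sub, LinearMap.add_apply, LinearMap.sub_apply]
    at h₁₂ h₁₃ h₂₃ ⊢
  simp only [hs w₂ w₁, hs w₃ w₁, hs w₃ w₂] at h₁₂ h₁₃ h₂₃ ⊢
  linarith [h w₁, h w₂, h w₃]

-- Lagrange's identity (Cauchy-Schwarz) for the coefficients of `μ`, whose squares sum to `< 4`.
theorem apply_muComb_le (hB : B.IsPosSemidef) (w₀ w₁ w₂ w₃ : M) :
    B (muComb w₀ w₁ w₂ w₃) (muComb w₀ w₁ w₂ w₃)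
      ≤ 4 * (B w₀ w₀ + B w₁ w₁ + B w₂ w₂ + B w₃ w₃) := by
  have h := hB.isNonneg.nonneg
  have h₀₁ := h ((12 : ℝ) • w₀ + (5 : ℝ) • w₁); have h₀₂ := h ((15 : ℝ) • w₀ - (4 : ℝ) • w₂)
  have h₀₃ := h ((3 : ℝ) • w₀ + w₃); have h₁₂ := h ((25 : ℝ) • w₁ + (16 : ℝ) • w₂)
  have h₁₃ := h ((5 : ℝ) • w₁ - (4 : ℝ) • w₃); have h₂₃ := h ((4 : ℝ) • w₂ + (5 : ℝ) • w₃)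
  have hs := hB.isSymm.eq
  simp only [muComb, map_add, map_sub, map_smul, LinearMap.add_apply, LinearMap.sub_apply,
    LinearMap.smul_apply, smul_eq_mul] at h₀₁ h₀₂ h₀₃ h₁₂ h₁₃ h₂₃ ⊢
  simp only [hs w₁ w₀, hs w₂ w₀, hs w₂ w₁, hs w₃ w₀, hs w₃ w₁, hs w₃ w₂]
    at h₀₁ h₀₂ h₀₃ h₁₂ h₁₃ h₂₃ ⊢
  linarith [h w₀, h w₁, h w₂, h w₃]

-- Young's inequality on each term `δᵢ B(v₆₋ᵢ, v₆)`, with weight `|δᵢ| / 13` on `B v₆ v₆`.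
theorem le_apply_deltaComb_self (hB : B.IsPosSemidef) (v₀ v₁ v₂ v₃ v₄ v₅ v₆ : M) :
    B v₆ v₆ / 2 - 25 * (B v₀ v₀ + B v₁ v₁ + B v₂ v₂ + B v₃ v₃ + B v₄ v₄ + B v₅ v₅)
      ≤ B (deltaComb v₀ v₁ v₂ v₃ v₄ v₅ v₆) v₆ := by
  have h := hB.isNonneg.nonneg
  have h₀ := h ((2 : ℝ) • v₆ + (13 : ℝ) • v₀); have h₁ := h ((2 : ℝ) • v₆ - (13 : ℝ) • v₁)
  have h₂ := h ((2 : ℝ) • v₆ + (13 : ℝ) • v₂); have h₃ := h ((2 : ℝ) • v₆ - (13 : ℝ) • v₃)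
  have h₄ := h ((2 : ℝ) • v₆ + (13 : ℝ) • v₄); have h₅ := h ((2 : ℝ) • v₆ - (13 : ℝ) • v₅)
  have hs := hB.isSymm.eq
  simp only [deltaComb, map_add, map_sub, map_smul, LinearMap.add_apply, LinearMap.sub_apply,
    LinearMap.smul_apply, smul_eq_mul] at h₀ h₁ h₂ h₃ h₄ h₅ ⊢
  simp only [hs v₆ v₀, hs v₆ v₁, hs v₆ v₂, hs v₆ v₃, hs v₆ v₄, hs v₆ v₅] at h₀ h₁ h₂ h₃ h₄ h₅ ⊢
  linarith [h v₀, h v₁, h v₂, h v₃, h v₄, h v₅, h v₆]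

section Scheme

variable {Q : Type*} [AddCommGroup Q] [Module ℝ Q]

theorem bdfDiff_six (u : ℕ → M) (n : ℕ) :
    bdfDiff 6 u n = deltaComb (u (n - 6)) (u (n - 5)) (u (n - 4)) (u (n - 3)) (u (n - 2))
      (u (n - 1)) (u n) := by
  simp only [bdfDiff, sum_range_succ, range_zero, sum_empty, bdfCoeff_eq_sum_choose]
  norm_num [sum_Icc_succ_top, Nat.choose, deltaComb]
  module

/-- The fully discrete scheme multiplied by `τ`; `B` plays the role of the `H`-inner product and
`ℓ n` that of `⟨fⁿ, ·⟩_H`. -/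
structure IsSolution (B a : BilinForm ℝ M) (b : Q → M →ₗ[ℝ] ℝ) (j : BilinForm ℝ Q) (τ : ℝ)
    (ℓ : ℕ → M → ℝ) (N : ℕ) (u : ℕ → M) (p : ℕ → Q) : Prop where
  momentum : ∀ n, 6 ≤ n → n ≤ N → ∀ v,
    B (bdfDiff 6 u n) v + τ * a (u n) v + τ * b (p n) v = τ * ℓ n v
  constraint : ∀ n, 6 ≤ n → n ≤ N → ∀ r, b r (u n) = j r (p n)

/-- The lagged `a`-terms absorb the part of `a(μ(u)ⁿ, μ(u)ⁿ)` produced by Young's inequality that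
does not involve `uⁿ`. -/
noncomputable def energy (B a : BilinForm ℝ M) (j : BilinForm ℝ Q) (τ : ℝ) (u : ℕ → M)
    (p : ℕ → Q) (n : ℕ) : ℝ :=
  gNormSq B (u (n - 5)) (u (n - 4)) (u (n - 3)) (u (n - 2)) (u (n - 1)) (u n) / 2
    + τ * muNormSq a (u (n - 2)) (u (n - 1)) (u n) + τ * muNormSq j (p (n - 2)) (p (n - 1)) (p n)
    + τ / 80 * (3 * a (u n) (u n) + 2 * a (u (n - 1)) (u (n - 1)) + a (u (n - 2)) (u (n - 2)))

variable {a : BilinForm ℝ M} {b : Q → M →ₗ[ℝ] ℝ} {j : BilinForm ℝ Q} {τ : ℝ}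
  {ℓ : ℕ → M → ℝ} {φ : ℕ → ℝ} {N : ℕ} {u : ℕ → M} {p : ℕ → Q}

theorem IsSolution.crude_step_le (hsol : IsSolution B a b j τ ℓ N u p) (hB : B.IsPosSemidef)
    (ha : a.IsNonneg) (hj : j.IsNonneg) (hτ : 0 ≤ τ) (hℓ : ∀ n v, ℓ n v ≤ φ n * √(a v v))
    {n : ℕ} (h6 : 6 ≤ n) (hn : n ≤ N) :
    B (u n) (u n) + τ * a (u n) (u n) + τ * j (p n) (p n)
      ≤ τ * φ n ^ 2 + 50 * (B (u (n - 6)) (u (n - 6)) + B (u (n - 5)) (u (n - 5))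
        + B (u (n - 4)) (u (n - 4)) + B (u (n - 3)) (u (n - 3)) + B (u (n - 2)) (u (n - 2))
        + B (u (n - 1)) (u (n - 1))) := by
  have hm := hsol.momentum n h6 hn (u n)
  rw [hsol.constraint n h6 hn (p n), bdfDiff_six] at hm
  have hδ := le_apply_deltaComb_self hB (u (n - 6)) (u (n - 5)) (u (n - 4)) (u (n - 3))
    (u (n - 2)) (u (n - 1)) (u n)
  have hdata := mul_le_mul_of_nonneg_left
    ((hℓ n (u n)).trans (mul_sqrt_le_mul_sq_add_div (φ n) (ha.nonneg (u n)) one_half_pos)) hτ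
  have hj₀ := mul_nonneg hτ (hj.nonneg (p n))
  linarith

theorem IsSolution.energy_succ_le (hsol : IsSolution B a b j τ ℓ N u p) (hB : B.IsPosSemidef)
    (ha : a.IsPosSemidef) (hj : j.IsPosSemidef) (hτ : 0 ≤ τ)
    (hℓ : ∀ n v, ℓ n v ≤ φ n * √(a v v)) {n : ℕ} (h8 : 8 ≤ n) (hn : n < N) :
    energy B a j τ u p (n + 1) + τ / 20 * (a (u (n + 1)) (u (n + 1)) + j (p (n + 1)) (p (n + 1)))
      ≤ energy B a j τ u p n + 80 * τ * φ (n + 1) ^ 2 := by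
  obtain ⟨k, rfl⟩ := Nat.exists_eq_add_of_le' h8
  set m := muComb (u (k + 6)) (u (k + 7)) (u (k + 8)) (u (k + 9))
  have hm := hsol.momentum (k + 9) (by omega) (by omega) m
  have hb : b (p (k + 9)) m
      = j (p (k + 9)) (muComb (p (k + 6)) (p (k + 7)) (p (k + 8)) (p (k + 9))) := by
    simp only [m, muComb, map_add, map_sub, map_smul, smul_eq_mul,
      hsol.constraint (k + 6) (by omega) (by omega), hsol.constraint (k + 7) (by omega) (by omega),
      hsol.constraint (k + 8) (by omega) (by omega), hsol.constraint (k + 9) (by omega) (by omega)]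
  rw [hb, bdfDiff_six] at hm
  simp only [Nat.reduceSubDiff] at hm
  have hG := gNormSq_sub_gNormSq_le hB (u (k + 3)) (u (k + 4)) (u (k + 5)) (u (k + 6)) (u (k + 7))
    (u (k + 8)) (u (k + 9))
  have hμa := mul_le_mul_of_nonneg_left
    (muNormSq_sub_muNormSq_le ha (u (k + 6)) (u (k + 7)) (u (k + 8)) (u (k + 9))) hτ
  have hμj := mul_le_mul_of_nonneg_left
    (muNormSq_sub_muNormSq_le hj (p (k + 6)) (p (k + 7)) (p (k + 8)) (p (k + 9))) hτ
  have hm_le := mul_le_mul_of_nonneg_left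
    (apply_muComb_le ha (u (k + 6)) (u (k + 7)) (u (k + 8)) (u (k + 9))) hτ
  have hdata := mul_le_mul_of_nonneg_left ((hℓ (k + 9) m).trans
    (mul_sqrt_le_mul_sq_add_div (φ (k + 9)) (ha.isNonneg.nonneg m) (by norm_num : (0 : ℝ) < 80))) hτ
  have hj₀ := mul_nonneg hτ (hj.isNonneg.nonneg (p (k + 9)))
  simp only [energy, show k + 8 + 1 = k + 9 from rfl, Nat.reduceSubDiff]
  linarith

theorem le_energy (hB : B.IsPosSemidef) (ha : a.IsPosSemidef) (hj : j.IsPosSemidef) (hτ : 0 ≤ τ)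
    (u : ℕ → M) (p : ℕ → Q) (n : ℕ) : B (u n) (u n) ≤ 200 * energy B a j τ u p n := by
  have hG := le_gNormSq hB (u (n - 5)) (u (n - 4)) (u (n - 3)) (u (n - 2)) (u (n - 1)) (u n)
  have hμa := mul_nonneg hτ (muNormSq_nonneg ha (u (n - 2)) (u (n - 1)) (u n))
  have hμj := mul_nonneg hτ (muNormSq_nonneg hj (p (n - 2)) (p (n - 1)) (p n))
  have h := fun v => mul_nonneg hτ (ha.isNonneg.nonneg v)
  simp only [energy]
  linarith [h (u n), h (u (n - 1)), h (u (n - 2))]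

theorem energy_le (hB : B.IsPosSemidef) (ha : a.IsPosSemidef) (hj : j.IsPosSemidef) (hτ : 0 ≤ τ)
    (u : ℕ → M) (p : ℕ → Q) (n : ℕ) :
    energy B a j τ u p n ≤ 18 * (B (u (n - 5)) (u (n - 5)) + B (u (n - 4)) (u (n - 4))
      + B (u (n - 3)) (u (n - 3)) + B (u (n - 2)) (u (n - 2)) + B (u (n - 1)) (u (n - 1))
      + B (u n) (u n)) + 3 * τ * (a (u (n - 2)) (u (n - 2)) + a (u (n - 1)) (u (n - 1))
      + a (u n) (u n)) + 2 * τ * (j (p (n - 2)) (p (n - 2)) + j (p (n - 1)) (p (n - 1))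
      + j (p n) (p n)) := by
  have hG := gNormSq_le hB (u (n - 5)) (u (n - 4)) (u (n - 3)) (u (n - 2)) (u (n - 1)) (u n)
  have hμa := mul_le_mul_of_nonneg_left (muNormSq_le ha (u (n - 2)) (u (n - 1)) (u n)) hτ
  have hμj := mul_le_mul_of_nonneg_left (muNormSq_le hj (p (n - 2)) (p (n - 1)) (p n)) hτ
  have h := fun v => mul_nonneg hτ (ha.isNonneg.nonneg v)
  simp only [energy]
  linarith [h (u n), h (u (n - 1)), h (u (n - 2))]

theorem IsSolution.startup_le (hsol : IsSolution B a b j τ ℓ N u p) (hB : B.IsPosSemidef)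
    (ha : a.IsNonneg) (hj : j.IsNonneg) (hτ : 0 ≤ τ) (hℓ : ∀ n v, ℓ n v ≤ φ n * √(a v v))
    {n : ℕ} (h6 : 6 ≤ n) (hn : n ≤ min N 8) :
    B (u n) (u n) + τ * a (u n) (u n) + τ * j (p n) (p n)
      ≤ 51 ^ 3 * (∑ i ∈ range 6, B (u i) (u i) + τ * ∑ k ∈ Icc 6 N, φ k ^ 2) := by
  set D := ∑ i ∈ range 6, B (u i) (u i) + τ * ∑ k ∈ Icc 6 N, φ k ^ 2 with hD
  have hB₀ := hB.isNonneg.nonneg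
  have hτa := fun v => mul_nonneg hτ (ha.nonneg v)
  have hτj := fun r => mul_nonneg hτ (hj.nonneg r)
  have hφ : 0 ≤ τ * ∑ k ∈ Icc 6 N, φ k ^ 2 := mul_nonneg hτ (sum_nonneg fun _ _ => sq_nonneg _)
  have hR : ∀ k, 6 ≤ k → k ≤ N → B (u k) (u k) + τ * a (u k) (u k) + τ * j (p k) (p k)
      ≤ τ * ∑ k ∈ Icc 6 N, φ k ^ 2 + 50 * (B (u (k - 6)) (u (k - 6)) + B (u (k - 5)) (u (k - 5))
        + B (u (k - 4)) (u (k - 4)) + B (u (k - 3)) (u (k - 3)) + B (u (k - 2)) (u (k - 2))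
        + B (u (k - 1)) (u (k - 1))) := fun k hk hkN =>
    (hsol.crude_step_le hB ha hj hτ hℓ hk hkN).trans <| by
      gcongr
      exact single_le_sum (f := fun k => φ k ^ 2) (fun _ _ => sq_nonneg _) (mem_Icc.2 ⟨hk, hkN⟩)
  simp only [sum_range_succ, sum_range_zero, zero_add] at hD
  have h₆ : 6 ≤ N → B (u 6) (u 6) + τ * a (u 6) (u 6) + τ * j (p 6) (p 6) ≤ 51 * D := fun hN => by
    have := hR 6 le_rfl hN
    norm_num at this
    linarith [hB₀ (u 0), hB₀ (u 1), hB₀ (u 2), hB₀ (u 3), hB₀ (u 4), hB₀ (u 5)]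
  have h₇ : 7 ≤ N → B (u 7) (u 7) + τ * a (u 7) (u 7) + τ * j (p 7) (p 7) ≤ 51 ^ 2 * D :=
    fun hN => by
    have := hR 7 (by norm_num) hN
    norm_num at this
    linarith [h₆ (by omega), hB₀ (u 0), hB₀ (u 1), hB₀ (u 2), hB₀ (u 3), hB₀ (u 4), hB₀ (u 5),
      hτa (u 6), hτj (p 6)]
  have h₈ : 8 ≤ N → B (u 8) (u 8) + τ * a (u 8) (u 8) + τ * j (p 8) (p 8) ≤ 51 ^ 3 * D :=
    fun hN => by
    have := hR 8 (by norm_num) hN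
    norm_num at this
    linarith [h₆ (by omega), h₇ (by omega), hB₀ (u 0), hB₀ (u 1), hB₀ (u 2), hB₀ (u 3),
      hB₀ (u 4), hB₀ (u 5), hτa (u 6), hτj (p 6), hτa (u 7), hτj (p 7)]
  have hD₀ : 0 ≤ D := by
    linarith [hB₀ (u 0), hB₀ (u 1), hB₀ (u 2), hB₀ (u 3), hB₀ (u 4), hB₀ (u 5)]
  have hN : n ≤ N := hn.trans (min_le_left _ _)
  have h8 : n ≤ 8 := hn.trans (min_le_right _ _)
  interval_cases n
  · linarith [h₆ hN]
  · linarith [h₇ hN]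
  · exact h₈ hN

theorem IsSolution.tail_le (hsol : IsSolution B a b j τ ℓ N u p) (hB : B.IsPosSemidef)
    (ha : a.IsPosSemidef) (hj : j.IsPosSemidef) (hτ : 0 ≤ τ)
    (hℓ : ∀ n v, ℓ n v ≤ φ n * √(a v v)) (hN : 8 ≤ N) :
    B (u N) (u N) + ∑ n ∈ Ioc 8 N, (τ * a (u n) (u n) + τ * j (p n) (p n))
      ≤ 200 * (energy B a j τ u p 8 + 80 * (τ * ∑ n ∈ Icc 6 N, φ n ^ 2)) := by
  have htel := add_sum_Ioc_le_add_sum_Ioc (E := energy B a j τ u p)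
    (D := fun n => τ / 20 * (a (u n) (u n) + j (p n) (p n))) (F := fun n => 80 * τ * φ n ^ 2)
    hN fun n h8 hn => hsol.energy_succ_le hB ha hj hτ hℓ h8 hn
  have hdiss : ∑ n ∈ Ioc 8 N, τ / 20 * (a (u n) (u n) + j (p n) (p n))
      = (∑ n ∈ Ioc 8 N, (τ * a (u n) (u n) + τ * j (p n) (p n))) / 20 := by
    rw [sum_div]
    exact sum_congr rfl fun n _ => by ring
  have hdiss₀ : 0 ≤ ∑ n ∈ Ioc 8 N, (τ * a (u n) (u n) + τ * j (p n) (p n)) :=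
    sum_nonneg fun n _ =>
      add_nonneg (mul_nonneg hτ (ha.isNonneg.nonneg _)) (mul_nonneg hτ (hj.isNonneg.nonneg _))
  have hdata : ∑ n ∈ Ioc 8 N, 80 * τ * φ n ^ 2 ≤ 80 * (τ * ∑ n ∈ Icc 6 N, φ n ^ 2) := by
    rw [← mul_sum, mul_assoc]
    gcongr 80 * (τ * ?_)
    exact sum_le_sum_of_subset_of_nonneg (Ioc_subset_Icc_self.trans
      (Icc_subset_Icc_left (by norm_num))) fun n _ _ => sq_nonneg _
  linarith [le_energy hB ha hj hτ u p N]

theorem IsSolution.energy_estimate (hsol : IsSolution B a b j τ ℓ N u p) (hB : B.IsPosSemidef)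
    (ha : a.IsPosSemidef) (hj : j.IsPosSemidef) (hτ : 0 ≤ τ)
    (hℓ : ∀ n v, ℓ n v ≤ φ n * √(a v v)) (hN : 6 ≤ N) :
    B (u N) (u N) + τ * ∑ n ∈ Icc 6 N, a (u n) (u n) + τ * ∑ n ∈ Icc 6 N, j (p n) (p n)
      ≤ 2 * 10 ^ 9 * (∑ i ∈ range 6, B (u i) (u i) + τ * ∑ n ∈ Icc 6 N, φ n ^ 2) := by
  set D := ∑ i ∈ range 6, B (u i) (u i) + τ * ∑ n ∈ Icc 6 N, φ n ^ 2 with hD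
  have hB₀ := hB.isNonneg.nonneg
  have hτa := fun v => mul_nonneg hτ (ha.isNonneg.nonneg v)
  have hτj := fun r => mul_nonneg hτ (hj.isNonneg.nonneg r)
  have hφ₀ : 0 ≤ τ * ∑ n ∈ Icc 6 N, φ n ^ 2 := mul_nonneg hτ (sum_nonneg fun _ _ => sq_nonneg _)
  have hstart : ∀ n, 6 ≤ n → n ≤ min N 8 →
      B (u n) (u n) + τ * a (u n) (u n) + τ * j (p n) (p n) ≤ 51 ^ 3 * D :=
    fun n h6 hn => hsol.startup_le hB ha.isNonneg hj.isNonneg hτ hℓ h6 hn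
  simp only [sum_range_succ, sum_range_zero, zero_add] at hD
  have hD₀ : 0 ≤ D := by
    linarith [hB₀ (u 0), hB₀ (u 1), hB₀ (u 2), hB₀ (u 3), hB₀ (u 4), hB₀ (u 5)]
  rw [add_assoc, mul_sum, mul_sum, ← sum_add_distrib]
  rcases le_total N 8 with hN8 | hN8
  · have hsum : ∑ n ∈ Icc 6 N, (τ * a (u n) (u n) + τ * j (p n) (p n)) ≤ 3 * (51 ^ 3 * D) :=
      calc ∑ n ∈ Icc 6 N, (τ * a (u n) (u n) + τ * j (p n) (p n))
          ≤ ∑ n ∈ Icc 6 N, 51 ^ 3 * D := sum_le_sum fun n hn => by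
            rw [mem_Icc] at hn
            linarith [hstart n hn.1 (le_min hn.2 (hn.2.trans hN8)), hB₀ (u n)]
        _ ≤ 3 * (51 ^ 3 * D) := by
            rw [sum_const, Nat.card_Icc, nsmul_eq_mul]
            gcongr
            norm_cast
            omega
    linarith [hstart N hN (le_min le_rfl hN8), hτa (u N), hτj (p N)]
  · have hsplit : ∀ g : ℕ → ℝ, ∑ n ∈ Icc 6 N, g n = g 6 + g 7 + g 8 + ∑ n ∈ Ioc 8 N, g n := by
      intro g
      rw [show Icc 6 N = Ioc 5 N from Icc_add_one_left_eq_Ioc 5 N,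
        ← sum_Ioc_consecutive g (by norm_num : 5 ≤ 8) hN8, show Ioc 5 8 = {6, 7, 8} by decide]
      simp [add_assoc]
    have hE₈ := energy_le hB ha hj hτ u p 8
    norm_num at hE₈
    rw [hsplit]
    linarith [hsol.tail_le hB ha hj hτ hℓ hN8, hstart 6 le_rfl (by omega),
      hstart 7 (by norm_num) (by omega), hstart 8 (by norm_num) (by omega), hB₀ (u 0), hB₀ (u 1),
      hB₀ (u 2), hB₀ (u 3), hB₀ (u 4), hB₀ (u 5), hB₀ (u 6), hB₀ (u 7), hB₀ (u 8), hτa (u 6),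
      hτa (u 7), hτa (u 8), hτj (p 6), hτj (p 7), hτj (p 8)]

end Scheme

theorem isSolution_restrict_innerₗ {H : Type*} [NormedAddCommGroup H] [InnerProductSpace ℝ H]
    {V : Submodule ℝ H} {Q : Type*} [AddCommGroup Q] [Module ℝ Q] {a : BilinForm ℝ V}
    {b : Q →ₗ[ℝ] V →ₗ[ℝ] ℝ} {j : BilinForm ℝ Q} {τ : ℝ} (hτ : τ ≠ 0) {N : ℕ} {f : ℕ → H}
    {u : ℕ → V} {p : ℕ → Q}
    (h : ∀ n, 6 ≤ n → n ≤ N →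
      (∀ v : V, ⟪(τ⁻¹ • ∑ i ∈ range 7, bdfCoeff 6 i • ((u (n - i) : H)) : H), (v : H)⟫
        + a (u n) v + b (p n) v = ⟪f n, (v : H)⟫) ∧ (∀ r : Q, b r (u n) = j r (p n))) :
    IsSolution (BilinForm.restrict (innerₗ H) V) a b j τ (fun n v => ⟪f n, (v : H)⟫) N u p where
  momentum n h6 hn v := by
    have hmom := (h n h6 hn).1 v
    rw [real_inner_smul_left] at hmom
    rw [← hmom, restrict_innerₗ_apply, bdfDiff, Submodule.coe_sum]
    simp only [Submodule.coe_smul]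
    field_simp
  constraint n h6 hn := (h n h6 hn).2

end BDF6

/-- Velocity and pressure-seminorm stability for the six-step BDF method.
There is an absolute constant `C > 0` such that, in every abstract fully discrete Stokes
setting, every fully discrete BDF-6 solution satisfies
`‖u^N‖_H² + τ ∑_{n=6}^N ‖u^n‖_V² + τ ∑_{n=6}^N |p^n|_j²
  ≤ C [ ∑_{i=0}^5 ‖u^i‖_H² + (c_P²/ν) τ ∑_{n=6}^N ‖f^n‖_H² ]`.
Here `‖v‖_V² = a(v,v)` and `|r|_j² = j(r,r)`. -/
theorem bdf6_velocity_stability :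
    ∃ C : ℝ, 0 < C ∧
      ∀ (H : Type*) [NormedAddCommGroup H] [InnerProductSpace ℝ H] [CompleteSpace H]
        (Vh : Submodule ℝ H)
        (Qh : Type*) [AddCommGroup Qh] [Module ℝ Qh]
        (a : Vh →ₗ[ℝ] Vh →ₗ[ℝ] ℝ),
        (∀ v w : Vh, a v w = a w v) →
        (∀ v : Vh, v ≠ 0 → 0 < a v v) →
        ∀ (ν cP : ℝ), 0 < ν → 0 < cP →
        (∀ v : Vh, ‖(v : H)‖ ≤ cP / Real.sqrt ν * Real.sqrt (a v v)) →
        ∀ (b : Qh →ₗ[ℝ] Vh →ₗ[ℝ] ℝ) (j : Qh →ₗ[ℝ] Qh →ₗ[ℝ] ℝ),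
        (∀ r s : Qh, j r s = j s r) →
        (∀ r : Qh, 0 ≤ j r r) →
        ∀ (τ : ℝ), 0 < τ → ∀ (N : ℕ), 6 ≤ N →
        ∀ (f : ℕ → H) (u : ℕ → Vh) (p : ℕ → Qh),
        (∀ n, 6 ≤ n → n ≤ N →
          (∀ v : Vh,
            ⟪(τ⁻¹ • ∑ i ∈ Finset.range 7, bdfCoeff 6 i • ((u (n - i) : H)) : H),
                (v : H)⟫
              + a (u n) v + b (p n) v = ⟪f n, (v : H)⟫) ∧
          (∀ r : Qh, b r (u n) = j r (p n))) →
        ‖(u N : H)‖ ^ 2 + τ * ∑ n ∈ Finset.Icc 6 N, a (u n) (u n)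
            + τ * ∑ n ∈ Finset.Icc 6 N, j (p n) (p n)
          ≤ C * (∑ i ∈ Finset.range 6, ‖(u i : H)‖ ^ 2
              + cP ^ 2 / ν * (τ * ∑ n ∈ Finset.Icc 6 N, ‖f n‖ ^ 2)) := by
  refine ⟨2 * 10 ^ 9, by norm_num, ?_⟩
  intro H _ _ _ Vh Qh _ _ a ha_symm ha_pos ν cP hν _ hP b j hj_symm hj_nonneg τ hτ N hN f u p hsol
  have ha : BilinForm.IsPosSemidef a := ⟨⟨ha_symm⟩, ⟨fun v => by
    rcases eq_or_ne v 0 with rfl | hv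
    · simp
    · exact (ha_pos v hv).le⟩⟩
  have hℓ : ∀ n (v : Vh), ⟪f n, (v : H)⟫ ≤ cP / √ν * ‖f n‖ * √(a v v) := fun n v =>
    (real_inner_le_norm _ _).trans <| by
      rw [mul_comm (cP / √ν), mul_assoc]
      exact mul_le_mul_of_nonneg_left (hP v) (norm_nonneg _)
  have key := (BDF6.isSolution_restrict_innerₗ hτ.ne' hsol).energy_estimate
    (isPosSemidef_restrict_innerₗ Vh) ha ⟨⟨hj_symm⟩, ⟨hj_nonneg⟩⟩ hτ.le hℓ hN
  have hφ : τ * ∑ n ∈ Icc 6 N, (cP / √ν * ‖f n‖) ^ 2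
      = cP ^ 2 / ν * (τ * ∑ n ∈ Icc 6 N, ‖f n‖ ^ 2) := by
    rw [mul_sum, mul_sum, mul_sum]
    refine sum_congr rfl fun n _ => ?_
    rw [mul_pow, div_pow, Real.sq_sqrt hν.le]
    ring
  simpa only [restrict_innerₗ_apply, real_inner_self_eq_norm_sq, hφ] using key
end

section
/- (Stability of the time derivative for the continuous transient Stokes problem.) In the abstract transient Stokes setting, suppose in addition that the sufficiently regular solution u is continuously differentiable as a map into (V, ‖·‖_V). Then ∫_0^T ‖u′(t)‖_H² dt + ‖u(T)‖_V² ≤ ‖u(0)‖_V² + ∫_0^T ‖f(t)‖_H² dt. -/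
open scoped RealInnerProductSpace

private lemma bilin_nonneg {V : Type*} [AddCommGroup V] [Module ℝ V]
    (a : V →ₗ[ℝ] V →ₗ[ℝ] ℝ) (ha_pos : ∀ v : V, v ≠ 0 → 0 < a v v) (v : V) : 0 ≤ a v v := by
  by_cases h : v = 0
  · simp [h]
  · exact (ha_pos v h).le

private lemma bilin_cs {V : Type*} [AddCommGroup V] [Module ℝ V]
    (a : V →ₗ[ℝ] V →ₗ[ℝ] ℝ) (ha_symm : ∀ v w : V, a v w = a w v)
    (hnn : ∀ v : V, 0 ≤ a v v) (v w : V) : a v w ^ 2 ≤ a v v * a w w := by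
  have h : ∀ x : ℝ, 0 ≤ a w w * (x * x) + 2 * a v w * x + a v v := by
    intro x
    have h0 := hnn (v + x • w)
    simp only [map_add, map_smul, LinearMap.add_apply, LinearMap.smul_apply,
      smul_eq_mul] at h0
    rw [ha_symm w v] at h0
    nlinarith [h0]
  have hd := discrim_le_zero h
  rw [discrim] at hd
  nlinarith [hd]

private lemma bilin_cs_abs {V : Type*} [AddCommGroup V] [Module ℝ V]
    (a : V →ₗ[ℝ] V →ₗ[ℝ] ℝ) (ha_symm : ∀ v w : V, a v w = a w v)
    (hnn : ∀ v : V, 0 ≤ a v v) (v w : V) :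
    |a v w| ≤ Real.sqrt (a v v) * Real.sqrt (a w w) := by
  have h := bilin_cs a ha_symm hnn v w
  have : |a v w| = Real.sqrt (a v w ^ 2) := (Real.sqrt_sq_eq_abs _).symm
  rw [this, ← Real.sqrt_mul (hnn v)]
  exact Real.sqrt_le_sqrt h

/-- Stability of the time derivative for the continuous transient Stokes
problem. In the abstract transient Stokes setting, if the sufficiently regular solution
`u` is additionally continuously differentiable as a map into `(V, ‖·‖_V)` (with V-valued
derivative `uV'` agreeing with the H-valued derivative `u'`, differentiability and
continuity of the derivative being expressed in the norm `‖v‖_V = a(v,v)^{1/2}`), then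
`∫_0^T ‖u'(t)‖_H² dt + ‖u(T)‖_V² ≤ ‖u(0)‖_V² + ∫_0^T ‖f(t)‖_H² dt`. -/
theorem continuous_stokes_time_derivative_stability
    {H : Type*} [NormedAddCommGroup H] [InnerProductSpace ℝ H] [CompleteSpace H]
    (V : Submodule ℝ H)
    (a : V →ₗ[ℝ] V →ₗ[ℝ] ℝ)
    (ha_symm : ∀ v w : V, a v w = a w v)
    (ha_pos : ∀ v : V, v ≠ 0 → 0 < a v v)
    (ν cP : ℝ) (hν : 0 < ν) (hcP : 0 < cP)
    (hPoincare : ∀ v : V, ‖(v : H)‖ ≤ cP / Real.sqrt ν * Real.sqrt (a v v))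
    {Q : Type*} [NormedAddCommGroup Q] [NormedSpace ℝ Q]
    (b : Q →ₗ[ℝ] V →ₗ[ℝ] ℝ) (Cb : ℝ)
    (hb : ∀ (r : Q) (v : V), |b r v| ≤ Cb * ‖r‖ * Real.sqrt (a v v))
    (T : ℝ) (hT : 0 ≤ T)
    (u : ℝ → V) (p : ℝ → Q) (f : ℝ → H) (u' : ℝ → H)
    (hu : ∀ t ∈ Set.Icc (0 : ℝ) T,
      HasDerivWithinAt (fun s => (u s : H)) (u' t) (Set.Icc (0 : ℝ) T) t)
    (hu' : ContinuousOn u' (Set.Icc (0 : ℝ) T))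
    (huV : ContinuousOn (fun t => a (u t) (u t)) (Set.Icc (0 : ℝ) T))
    (hf : ContinuousOn f (Set.Icc (0 : ℝ) T))
    (heq : ∀ t ∈ Set.Icc (0 : ℝ) T,
      (∀ v : V, ⟪u' t, (v : H)⟫ + a (u t) v + b (p t) v = ⟪f t, (v : H)⟫) ∧
      (∀ r : Q, b r (u t) = 0))
    -- additional hypothesis: `u` is continuously differentiable as a map into `(V, ‖·‖_V)`
    (uV' : ℝ → V)
    (hcompat : ∀ t ∈ Set.Icc (0 : ℝ) T, (uV' t : H) = u' t)
    (huV' : ∀ t ∈ Set.Icc (0 : ℝ) T,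
      Filter.Tendsto
        (fun s : ℝ =>
          Real.sqrt (a ((s - t)⁻¹ • (u s - u t) - uV' t) ((s - t)⁻¹ • (u s - u t) - uV' t)))
        (nhdsWithin t (Set.Icc (0 : ℝ) T \ {t})) (nhds 0))
    (huV'cont : ∀ t ∈ Set.Icc (0 : ℝ) T,
      Filter.Tendsto (fun s : ℝ => Real.sqrt (a (uV' s - uV' t) (uV' s - uV' t)))
        (nhdsWithin t (Set.Icc (0 : ℝ) T)) (nhds 0)) :
    (∫ t in (0 : ℝ)..T, ‖u' t‖ ^ 2) + a (u T) (u T)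
      ≤ a (u 0) (u 0) + ∫ t in (0 : ℝ)..T, ‖f t‖ ^ 2 := by
  rcases hT.eq_or_lt with h0 | hT0
  · -- T = 0 : everything degenerates
    subst h0
    simp
  have hnn : ∀ v : V, 0 ≤ a v v := bilin_nonneg a ha_pos
  have hcs : ∀ v w : V, |a v w| ≤ Real.sqrt (a v v) * Real.sqrt (a w w) :=
    bilin_cs_abs a ha_symm hnn
  set I := Set.Icc (0 : ℝ) T with hI
  -- nontrivial punctured neighborhoods within I
  have hNeBot : ∀ t ∈ I, (nhdsWithin t (I \ {t})).NeBot := by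
    intro t ht
    rcases lt_or_eq_of_le ht.2 with hlt | hrfl
    · have hsub : Set.Ioc t T ⊆ I \ {t} := fun x hx =>
        ⟨⟨le_trans ht.1 hx.1.le, hx.2⟩, ne_of_gt hx.1⟩
      exact (left_nhdsWithin_Ioc_neBot hlt).mono (nhdsWithin_mono t hsub)
    · subst hrfl
      have hsub : Set.Ico 0 t ⊆ I \ {t} := fun x hx =>
        ⟨⟨hx.1, hx.2.le⟩, ne_of_lt hx.2⟩
      exact (right_nhdsWithin_Ico_neBot hT0).mono (nhdsWithin_mono t hsub)
  -- Step A : b r (uV' t) = 0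
  have hbV' : ∀ t ∈ I, ∀ r : Q, b r (uV' t) = 0 := by
    intro t ht r
    haveI := hNeBot t ht
    set l := nhdsWithin t (I \ {t}) with hl
    have h1 := huV' t ht
    have hbound : ∀ᶠ s in l, |b r (uV' t)| ≤ Cb * ‖r‖ *
        Real.sqrt (a ((s - t)⁻¹ • (u s - u t) - uV' t) ((s - t)⁻¹ • (u s - u t) - uV' t)) := by
      filter_upwards [self_mem_nhdsWithin] with s hs
      have hsI : s ∈ I := hs.1
      have hst : s - t ≠ 0 := sub_ne_zero.mpr hs.2
      have hbs : b r ((s - t)⁻¹ • (u s - u t)) = 0 := by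
        simp only [map_smul, map_sub, LinearMap.smul_apply, LinearMap.sub_apply,
          smul_eq_mul, (heq s hsI).2 r, (heq t ht).2 r]
        ring
      have : b r (uV' t) = -(b r ((s - t)⁻¹ • (u s - u t) - uV' t)) := by
        rw [map_sub, hbs]; ring
      rw [this, abs_neg]
      exact hb r _
    have hlim : Filter.Tendsto (fun s : ℝ => Cb * ‖r‖ *
        Real.sqrt (a ((s - t)⁻¹ • (u s - u t) - uV' t) ((s - t)⁻¹ • (u s - u t) - uV' t)))
        l (nhds 0) := by
      simpa using (tendsto_const_nhds (x := Cb * ‖r‖) (f := l)).mul h1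
    have h2 : |b r (uV' t)| ≤ 0 := ge_of_tendsto hlim hbound
    exact abs_eq_zero.mp (le_antisymm h2 (abs_nonneg _))
  -- Step B : derivative of φ t = a (u t) (u t)
  have hphi : ∀ t ∈ I, HasDerivWithinAt (fun s => a (u s) (u s))
      (2 * a (u t) (uV' t)) I t := by
    intro t ht
    rw [hasDerivWithinAt_iff_tendsto_slope]
    set l := nhdsWithin t (I \ {t}) with hl
    set e : ℝ → V := fun s => (s - t)⁻¹ • (u s - u t) - uV' t with he
    have h1 : Filter.Tendsto (fun s => Real.sqrt (a (e s) (e s))) l (nhds 0) := huV' t ht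
    have haee : Filter.Tendsto (fun s => a (e s) (e s)) l (nhds 0) := by
      have := h1.mul h1
      rw [mul_zero] at this
      exact this.congr fun s => Real.mul_self_sqrt (hnn _)
    have hav : ∀ w : V, Filter.Tendsto (fun s => a w (e s)) l (nhds 0) := by
      intro w
      have hg : Filter.Tendsto (fun s => Real.sqrt (a w w) * Real.sqrt (a (e s) (e s)))
          l (nhds 0) := by
        simpa using (tendsto_const_nhds (x := Real.sqrt (a w w)) (f := l)).mul h1
      exact squeeze_zero_norm (fun s => hcs w (e s)) hg
    set d : ℝ → V := fun s => (s - t)⁻¹ • (u s - u t) with hd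
    have hds : Filter.Tendsto (fun s => a (d s) (d s)) l (nhds (a (uV' t) (uV' t))) := by
      have hexp : ∀ s, a (d s) (d s)
          = a (e s) (e s) + 2 * a (uV' t) (e s) + a (uV' t) (uV' t) := by
        intro s
        have : d s = e s + uV' t := by simp [he, hd]
        rw [this]
        simp only [map_add, LinearMap.add_apply]
        rw [ha_symm (e s) (uV' t)]
        ring
      have hlim : Filter.Tendsto
          (fun s => a (e s) (e s) + 2 * a (uV' t) (e s) + a (uV' t) (uV' t)) l
          (nhds (a (uV' t) (uV' t))) := by
        have := (haee.add (((hav (uV' t)).const_mul 2))).add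
          (tendsto_const_nhds (x := a (uV' t) (uV' t)) (f := l))
        simpa using this
      exact hlim.congr fun s => (hexp s).symm
    have hst : Filter.Tendsto (fun s : ℝ => s - t) l (nhds 0) := by
      have : Filter.Tendsto (fun s : ℝ => s - t) (nhds t) (nhds (t - t)) :=
        (continuous_id.sub continuous_const).tendsto t
      rw [sub_self] at this
      exact this.mono_left nhdsWithin_le_nhds
    have hterm1 : Filter.Tendsto (fun s => (s - t) * a (d s) (d s)) l (nhds 0) := by
      simpa using hst.mul hds
    have hterm2 : Filter.Tendsto (fun s => 2 * a (u t) (d s)) l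
        (nhds (2 * a (u t) (uV' t))) := by
      have hdu : Filter.Tendsto (fun s => a (u t) (d s)) l (nhds (a (u t) (uV' t))) := by
        have hexp : ∀ s, a (u t) (d s) = a (u t) (e s) + a (u t) (uV' t) := by
          intro s
          have : d s = e s + uV' t := by simp [he, hd]
          rw [this, map_add]
        have := (hav (u t)).add (tendsto_const_nhds (x := a (u t) (uV' t)) (f := l))
        rw [zero_add] at this
        exact this.congr fun s => (hexp s).symm
      exact hdu.const_mul 2
    have hfinal : Filter.Tendsto (fun s => (s - t) * a (d s) (d s) + 2 * a (u t) (d s)) l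
        (nhds (2 * a (u t) (uV' t))) := by
      simpa using hterm1.add hterm2
    apply hfinal.congr'
    filter_upwards [self_mem_nhdsWithin] with s hs
    have hst0 : s - t ≠ 0 := sub_ne_zero.mpr hs.2
    rw [slope_def_field]
    simp only [hd, map_smul, map_sub, LinearMap.smul_apply, LinearMap.sub_apply,
      smul_eq_mul]
    rw [ha_symm (u t) (u s)]
    field_simp
    ring
  -- Step C : pointwise derivative bound
  set g : ℝ → ℝ := fun s => ‖u' s‖ ^ 2 - ‖f s‖ ^ 2 with hg
  have hu'sq : ContinuousOn (fun s => ‖u' s‖ ^ 2) I := (hu'.norm.pow 2)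
  have hfsq : ContinuousOn (fun s => ‖f s‖ ^ 2) I := (hf.norm.pow 2)
  have hgcont : ContinuousOn g I := hu'sq.sub hfsq
  have hbound : ∀ t ∈ I, 2 * a (u t) (uV' t) + g t ≤ 0 := by
    intro t ht
    have h1 := (heq t ht).1 (uV' t)
    rw [hcompat t ht, hbV' t ht (p t)] at h1
    have hself : ⟪u' t, u' t⟫ = ‖u' t‖ ^ 2 := real_inner_self_eq_norm_sq (u' t)
    have hCS : ⟪f t, u' t⟫ ≤ ‖f t‖ * ‖u' t‖ := real_inner_le_norm _ _
    simp only [hg]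
    nlinarith [sq_nonneg (‖f t‖ - ‖u' t‖), h1, hself, hCS]
  -- Step D : monotonicity of the energy functional
  set F : ℝ → ℝ := fun t => a (u t) (u t) + ∫ s in (0:ℝ)..t, g s with hF
  have hgInt : MeasureTheory.IntegrableOn g (Set.uIcc 0 T) MeasureTheory.volume := by
    rw [Set.uIcc_of_le hT]
    exact hgcont.integrableOn_Icc
  have hFc : ContinuousOn F I := by
    apply huV.add
    have := intervalIntegral.continuousOn_primitive_interval hgInt
    rwa [Set.uIcc_of_le hT] at this
  have hFd : ∀ t ∈ Set.Ioo (0:ℝ) T, HasDerivAt F (2 * a (u t) (uV' t) + g t) t := by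
    intro t ht
    have htI : t ∈ I := Set.mem_Icc_of_Ioo ht
    have hmem : I ∈ nhds t := Icc_mem_nhds ht.1 ht.2
    have h1 : HasDerivAt (fun s => a (u s) (u s)) (2 * a (u t) (uV' t)) t :=
      (hphi t htI).hasDerivAt hmem
    have hct : ContinuousAt g t := hgcont.continuousAt hmem
    have hInt2 : IntervalIntegrable g MeasureTheory.volume 0 t := by
      apply ContinuousOn.intervalIntegrable
      apply hgcont.mono
      rw [Set.uIcc_of_le ht.1.le]
      exact Set.Icc_subset_Icc le_rfl ht.2.le
    have hmeas : StronglyMeasurableAtFilter g (nhds t) MeasureTheory.volume :=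
      (hgcont.mono Set.Ioo_subset_Icc_self).stronglyMeasurableAtFilter isOpen_Ioo t ht
    have h2 : HasDerivAt (fun x => ∫ s in (0:ℝ)..x, g s) (g t) t :=
      intervalIntegral.integral_hasDerivAt_right hInt2 hmeas hct
    exact h1.add h2
  have hanti : AntitoneOn F I := by
    apply antitoneOn_of_deriv_nonpos (convex_Icc 0 T) hFc
    · intro x hx
      rw [interior_Icc] at hx
      exact (hFd x hx).differentiableAt.differentiableWithinAt
    · intro x hx
      rw [interior_Icc] at hx
      rw [(hFd x hx).deriv]
      exact hbound x (Set.mem_Icc_of_Ioo hx)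
  have hmono : F T ≤ F 0 :=
    hanti (Set.left_mem_Icc.mpr hT) (Set.right_mem_Icc.mpr hT) hT
  have hF0 : F 0 = a (u 0) (u 0) := by simp [hF]
  have hsplit : (∫ s in (0:ℝ)..T, g s)
      = (∫ s in (0:ℝ)..T, ‖u' s‖ ^ 2) - ∫ s in (0:ℝ)..T, ‖f s‖ ^ 2 := by
    apply intervalIntegral.integral_sub
    · apply ContinuousOn.intervalIntegrable
      rw [Set.uIcc_of_le hT]; exact hu'sq
    · apply ContinuousOn.intervalIntegrable
      rw [Set.uIcc_of_le hT]; exact hfsq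
  have hFT : F T = a (u T) (u T)
      + ((∫ s in (0:ℝ)..T, ‖u' s‖ ^ 2) - ∫ s in (0:ℝ)..T, ‖f s‖ ^ 2) := by
    rw [hF]; dsimp only; rw [hsplit]
  rw [hFT, hF0] at hmono
  linarith
end

section
/- (Combined velocity–pressure stability of the continuous transient Stokes problem.) In the abstract transient Stokes setting, suppose additionally that u is continuously differentiable as a map into (V, ‖·‖_V), that t ↦ ‖p(t)‖_Q is continuous, and that the inf-sup condition holds: there is β > 0 with β ‖r‖_Q ≤ sup_{v ∈ V, v ≠ 0} |b(r, v)| / ‖v‖_V for all r ∈ Q. Then there exists a constant C > 0 depending only on β such that ‖u(T)‖_H² + ∫_0^T ‖u(t)‖_V² dt + ∫_0^T ‖p(t)‖_Q² dt ≤ C [ ‖u(0)‖_H² + (c_P²/ν) ‖u(0)‖_V² + (c_P²/ν) ∫_0^T ‖f(t)‖_H² dt ]. -/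
/-!
Equip `V` with the inner product `a`: then `u` is a `C¹` curve in an inner product space `W`, and
the embedding `ι : W → H` (Poincaré) and the form `b` are bounded.
Testing the momentum equation with `u(t)` gives `d/dt ‖u‖_H² + ‖u‖_V² ≤ (c_P²/ν) ‖f‖_H²`.
Testing it with `u'(t)`, admissible since differentiating `b(r, u) = 0` gives `b(r, u') = 0`,
gives `‖u'‖_H² + d/dt ‖u‖_V² ≤ ‖f‖_H²`. The momentum equation expresses `b(p, ·)` through `f - u'`
and `u`, so the inf-sup condition gives `β ‖p‖_Q ≤ (c_P/√ν) ‖f - u'‖_H + ‖u‖_V`. Integrating over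
`[0, T]` and inserting the first two estimates into the third gives `C = 1 + 10 / β²`.
-/

open scoped RealInnerProductSpace

open Set Filter Topology MeasureTheory

noncomputable section

variable {E : Type*} [AddCommGroup E] [Module ℝ E]

abbrev LinearMap.innerCore (a : E →ₗ[ℝ] E →ₗ[ℝ] ℝ) (hsymm : ∀ v w, a v w = a w v)
    (hpos : ∀ v, v ≠ 0 → 0 < a v v) : InnerProductSpace.Core ℝ E where
  inner v w := a v w
  conj_inner_symm v w := hsymm w v
  re_inner_nonneg v := by
    rcases eq_or_ne v 0 with rfl | hv
    · simp
    · exact (hpos v hv).le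
  add_left := by simp
  smul_left := by simp
  definite v := by
    contrapose
    exact fun hv => (hpos v hv).ne'

/-- `E` as an inner product space through the core `c`; this keeps the new norm apart from any
norm `E` already carries. -/
def CoreSpace (_c : InnerProductSpace.Core ℝ E) : Type _ := E

namespace CoreSpace

variable (c : InnerProductSpace.Core ℝ E)

instance : AddCommGroup (CoreSpace c) := inferInstanceAs (AddCommGroup E)

instance : Module ℝ (CoreSpace c) := inferInstanceAs (Module ℝ E)

instance core : InnerProductSpace.Core ℝ (CoreSpace c) := c

instance : NormedAddCommGroup (CoreSpace c) :=
  InnerProductSpace.Core.toNormedAddCommGroup (𝕜 := ℝ)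

instance : InnerProductSpace ℝ (CoreSpace c) :=
  InnerProductSpace.ofCore (core c).toCore

def equiv : CoreSpace c ≃ₗ[ℝ] E := LinearEquiv.refl ℝ E

variable {c}

theorem inner_symm_equiv (v w : E) :
    ⟪(equiv c).symm v, (equiv c).symm w⟫ = c.inner v w := rfl

theorem norm_symm_equiv (v : E) : ‖(equiv c).symm v‖ = √(c.inner v v) := rfl

theorem norm_symm_equiv_sq (v : E) : ‖(equiv c).symm v‖ ^ 2 = c.inner v v := by
  rw [← real_inner_self_eq_norm_sq, inner_symm_equiv]

theorem tendsto_symm_equiv_iff {α : Type*} {l : Filter α} {v : α → E} {w : E} :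
    Tendsto (fun x => (equiv c).symm (v x)) l (𝓝 ((equiv c).symm w)) ↔
      Tendsto (fun x => √(c.inner (v x - w) (v x - w))) l (𝓝 0) := by
  rw [tendsto_iff_norm_sub_tendsto_zero]
  simp only [← map_sub, norm_symm_equiv]

theorem hasDerivWithinAt_symm_equiv_iff {u : ℝ → E} {d : E} {s : Set ℝ} {t : ℝ} :
    HasDerivWithinAt (fun x => (equiv c).symm (u x)) ((equiv c).symm d) s t ↔
      Tendsto (fun x => √(c.inner ((x - t)⁻¹ • (u x - u t) - d) ((x - t)⁻¹ • (u x - u t) - d)))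
        (𝓝[s \ {t}] t) (𝓝 0) := by
  rw [hasDerivWithinAt_iff_tendsto_slope, ← tendsto_symm_equiv_iff]
  exact tendsto_congr fun x => by simp only [slope_def_module, map_sub, map_smul]

end CoreSpace

end

theorem sub_add_integral_le_integral_of_hasDerivWithinAt {g g' h k : ℝ → ℝ} {a b : ℝ}
    (hab : a ≤ b) (hg : ∀ t ∈ Icc a b, HasDerivWithinAt g (g' t) (Icc a b) t)
    (hh : ContinuousOn h (Icc a b)) (hk : ContinuousOn k (Icc a b))
    (hle : ∀ t ∈ Ioo a b, g' t + h t ≤ k t) :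
    g b - g a + ∫ t in a..b, h t ≤ ∫ t in a..b, k t := by
  have hint : ∫ t in a..b, (k t - h t) = (∫ t in a..b, k t) - ∫ t in a..b, h t :=
    intervalIntegral.integral_sub (hk.intervalIntegrable_of_Icc hab)
      (hh.intervalIntegrable_of_Icc hab)
  have hsub : g b - g a ≤ ∫ t in a..b, (k t - h t) :=
    intervalIntegral.sub_le_integral_of_hasDeriv_right_of_le hab
      (fun t ht => (hg t ht).continuousWithinAt)
      (fun t ht => ((hg t (Ioo_subset_Icc_self ht)).hasDerivAt
        (Icc_mem_nhds ht.1 ht.2)).hasDerivWithinAt)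
      ((hk.sub hh).integrableOn_Icc) (fun t ht => by linarith [hle t ht])
  linarith

section StokesSolution

variable {W H Q : Type*} [NormedAddCommGroup W] [InnerProductSpace ℝ W]
  [NormedAddCommGroup H] [InnerProductSpace ℝ H] [SeminormedAddCommGroup Q] [NormedSpace ℝ Q]

/-- `u ∈ C¹([0, T]; W)` with derivative `u'` and `p` solve the Stokes problem with forcing `f`;
`ι : W → H` is the embedding and the inner product of `W` plays the role of `a`. -/
structure IsStokesSolution (ι : W →L[ℝ] H) (b : Q →L[ℝ] W →L[ℝ] ℝ) (T : ℝ)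
    (u u' : ℝ → W) (p : ℝ → Q) (f : ℝ → H) : Prop where
  hasDerivWithinAt : ∀ t ∈ Icc 0 T, HasDerivWithinAt u (u' t) (Icc 0 T) t
  continuousOn_deriv : ContinuousOn u' (Icc 0 T)
  continuousOn_forcing : ContinuousOn f (Icc 0 T)
  continuousOn_norm_pressure : ContinuousOn (‖p ·‖) (Icc 0 T)
  momentum : ∀ t ∈ Icc 0 T, ∀ v, ⟪ι (u' t), ι v⟫ + ⟪u t, v⟫ + b (p t) v = ⟪f t, ι v⟫
  incompressible : ∀ t ∈ Icc 0 T, ∀ r, b r (u t) = 0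

namespace IsStokesSolution

variable {ι : W →L[ℝ] H} {b : Q →L[ℝ] W →L[ℝ] ℝ} {T κ β : ℝ} {u u' : ℝ → W} {p : ℝ → Q}
  {f : ℝ → H}

theorem continuousOn (hs : IsStokesSolution ι b T u u' p f) : ContinuousOn u (Icc 0 T) :=
  fun t ht => (hs.hasDerivWithinAt t ht).continuousWithinAt

theorem apply_deriv_eq_zero (hs : IsStokesSolution ι b T u u' p f) {t : ℝ} (ht : t ∈ Ioo 0 T)
    (r : Q) : b r (u' t) = 0 := by
  have hu : HasDerivAt u (u' t) t :=
    (hs.hasDerivWithinAt t (Ioo_subset_Icc_self ht)).hasDerivAt (Icc_mem_nhds ht.1 ht.2)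
  have hzero : (b r ∘ u) =ᶠ[𝓝 t] fun _ => 0 :=
    eventually_of_mem (Icc_mem_nhds ht.1 ht.2) fun s hs' => hs.incompressible s hs' r
  exact ((b r).hasFDerivAt.comp_hasDerivAt t hu).unique
    ((hasDerivAt_const t 0).congr_of_eventuallyEq hzero)

theorem energy_inequality (hs : IsStokesSolution ι b T u u' p f)
    (hι : ∀ w, ‖ι w‖ ≤ κ * ‖w‖) {t : ℝ} (ht : t ∈ Icc 0 T) :
    2 * ⟪ι (u t), ι (u' t)⟫ + ‖u t‖ ^ 2 ≤ κ ^ 2 * ‖f t‖ ^ 2 := by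
  have heq := hs.momentum t ht (u t)
  rw [hs.incompressible t ht, real_inner_self_eq_norm_sq, real_inner_comm] at heq
  have hf : ⟪f t, ι (u t)⟫ ≤ ‖f t‖ * (κ * ‖u t‖) :=
    (real_inner_le_norm _ _).trans (mul_le_mul_of_nonneg_left (hι _) (norm_nonneg _))
  nlinarith [two_mul_le_add_sq (κ * ‖f t‖) ‖u t‖]

theorem deriv_energy_inequality (hs : IsStokesSolution ι b T u u' p f)
    {t : ℝ} (ht : t ∈ Ioo 0 T) :
    2 * ⟪u t, u' t⟫ + ‖ι (u' t)‖ ^ 2 ≤ ‖f t‖ ^ 2 := by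
  have heq := hs.momentum t (Ioo_subset_Icc_self ht) (u' t)
  rw [hs.apply_deriv_eq_zero ht, real_inner_self_eq_norm_sq] at heq
  nlinarith [real_inner_le_norm (f t) (ι (u' t)), two_mul_le_add_sq ‖f t‖ ‖ι (u' t)‖]

theorem mul_norm_pressure_le (hs : IsStokesSolution ι b T u u' p f)
    (hι : ∀ w, ‖ι w‖ ≤ κ * ‖w‖) (hκ : 0 ≤ κ) (hb : ∀ r, β * ‖r‖ ≤ ‖b r‖) {t : ℝ}
    (ht : t ∈ Icc 0 T) : β * ‖p t‖ ≤ κ * ‖f t - ι (u' t)‖ + ‖u t‖ := by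
  refine (hb (p t)).trans ((b (p t)).opNorm_le_bound (by positivity) fun v => ?_)
  have hbv : b (p t) v = ⟪f t - ι (u' t), ι v⟫ - ⟪u t, v⟫ := by
    rw [inner_sub_left, ← hs.momentum t ht v]
    ring
  rw [hbv, Real.norm_eq_abs]
  calc |⟪f t - ι (u' t), ι v⟫ - ⟪u t, v⟫|
      ≤ ‖f t - ι (u' t)‖ * ‖ι v‖ + ‖u t‖ * ‖v‖ :=
        (abs_sub _ _).trans (add_le_add (abs_real_inner_le_norm _ _) (abs_real_inner_le_norm _ _))
    _ ≤ ‖f t - ι (u' t)‖ * (κ * ‖v‖) + ‖u t‖ * ‖v‖ := by gcongr; exact hι v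
    _ = (κ * ‖f t - ι (u' t)‖ + ‖u t‖) * ‖v‖ := by ring

theorem pressure_inequality (hs : IsStokesSolution ι b T u u' p f)
    (hι : ∀ w, ‖ι w‖ ≤ κ * ‖w‖) (hκ : 0 ≤ κ) (hb : ∀ r, β * ‖r‖ ≤ ‖b r‖) (hβ : 0 ≤ β) {t : ℝ}
    (ht : t ∈ Icc 0 T) :
    β ^ 2 * ‖p t‖ ^ 2 ≤ 4 * κ ^ 2 * (‖f t‖ ^ 2 + ‖ι (u' t)‖ ^ 2) + 2 * ‖u t‖ ^ 2 := by
  have hres : ‖f t - ι (u' t)‖ ^ 2 ≤ 2 * (‖f t‖ ^ 2 + ‖ι (u' t)‖ ^ 2) :=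
    (pow_le_pow_left₀ (norm_nonneg _) (norm_sub_le _ _) 2).trans add_sq_le
  calc β ^ 2 * ‖p t‖ ^ 2 = (β * ‖p t‖) ^ 2 := by ring
    _ ≤ (κ * ‖f t - ι (u' t)‖ + ‖u t‖) ^ 2 :=
        pow_le_pow_left₀ (by positivity) (hs.mul_norm_pressure_le hι hκ hb ht) 2
    _ ≤ 2 * (κ ^ 2 * ‖f t - ι (u' t)‖ ^ 2 + ‖u t‖ ^ 2) := by
        simpa only [mul_pow] using add_sq_le (a := κ * ‖f t - ι (u' t)‖) (b := ‖u t‖)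
    _ ≤ 4 * κ ^ 2 * (‖f t‖ ^ 2 + ‖ι (u' t)‖ ^ 2) + 2 * ‖u t‖ ^ 2 := by
        nlinarith [mul_le_mul_of_nonneg_left hres (sq_nonneg κ)]

theorem energy_estimate (hs : IsStokesSolution ι b T u u' p f) (hι : ∀ w, ‖ι w‖ ≤ κ * ‖w‖)
    (hT : 0 ≤ T) :
    ‖ι (u T)‖ ^ 2 - ‖ι (u 0)‖ ^ 2 + ∫ t in 0..T, ‖u t‖ ^ 2 ≤
      κ ^ 2 * ∫ t in 0..T, ‖f t‖ ^ 2 := by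
  rw [← intervalIntegral.integral_const_mul]
  exact sub_add_integral_le_integral_of_hasDerivWithinAt hT
    (fun t ht => (ι.hasFDerivAt.comp_hasDerivWithinAt t (hs.hasDerivWithinAt t ht)).norm_sq)
    (hs.continuousOn.norm.pow 2) (continuousOn_const.mul (hs.continuousOn_forcing.norm.pow 2))
    (fun t ht => hs.energy_inequality hι (Ioo_subset_Icc_self ht))

theorem deriv_energy_estimate (hs : IsStokesSolution ι b T u u' p f) (hT : 0 ≤ T) :
    ‖u T‖ ^ 2 - ‖u 0‖ ^ 2 + ∫ t in 0..T, ‖ι (u' t)‖ ^ 2 ≤ ∫ t in 0..T, ‖f t‖ ^ 2 :=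
  sub_add_integral_le_integral_of_hasDerivWithinAt hT
    (fun t ht => (hs.hasDerivWithinAt t ht).norm_sq)
    ((ι.continuous.comp_continuousOn hs.continuousOn_deriv).norm.pow 2)
    (hs.continuousOn_forcing.norm.pow 2) (fun _ ht => hs.deriv_energy_inequality ht)

theorem pressure_estimate (hs : IsStokesSolution ι b T u u' p f) (hι : ∀ w, ‖ι w‖ ≤ κ * ‖w‖)
    (hκ : 0 ≤ κ) (hb : ∀ r, β * ‖r‖ ≤ ‖b r‖) (hβ : 0 ≤ β) (hT : 0 ≤ T) :
    β ^ 2 * ∫ t in 0..T, ‖p t‖ ^ 2 ≤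
      4 * κ ^ 2 * ((∫ t in 0..T, ‖f t‖ ^ 2) + ∫ t in 0..T, ‖ι (u' t)‖ ^ 2) +
        2 * ∫ t in 0..T, ‖u t‖ ^ 2 := by
  have hint {g : ℝ → ℝ} (hg : ContinuousOn g (Icc 0 T)) : IntervalIntegrable g volume 0 T :=
    hg.intervalIntegrable_of_Icc hT
  have hf : IntervalIntegrable (fun t => ‖f t‖ ^ 2) volume 0 T :=
    hint (hs.continuousOn_forcing.norm.pow 2)
  have hu' : IntervalIntegrable (fun t => ‖ι (u' t)‖ ^ 2) volume 0 T :=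
    hint ((ι.continuous.comp_continuousOn hs.continuousOn_deriv).norm.pow 2)
  have hu : IntervalIntegrable (fun t => ‖u t‖ ^ 2) volume 0 T :=
    hint (hs.continuousOn.norm.pow 2)
  rw [← intervalIntegral.integral_add hf hu', ← intervalIntegral.integral_const_mul,
    ← intervalIntegral.integral_const_mul, ← intervalIntegral.integral_const_mul,
    ← intervalIntegral.integral_add ((hf.add hu').const_mul _) (hu.const_mul _)]
  exact intervalIntegral.integral_mono_on hT
    ((hint (hs.continuousOn_norm_pressure.pow 2)).const_mul _)
    (((hf.add hu').const_mul _).add (hu.const_mul _))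
    fun t ht => hs.pressure_inequality hι hκ hb hβ ht

theorem stability (hs : IsStokesSolution ι b T u u' p f) (hι : ∀ w, ‖ι w‖ ≤ κ * ‖w‖)
    (hκ : 0 ≤ κ) (hb : ∀ r, β * ‖r‖ ≤ ‖b r‖) (hβ : 0 < β) (hT : 0 ≤ T) :
    ‖ι (u T)‖ ^ 2 + (∫ t in 0..T, ‖u t‖ ^ 2) + ∫ t in 0..T, ‖p t‖ ^ 2 ≤
      (1 + 10 / β ^ 2) *
        (‖ι (u 0)‖ ^ 2 + κ ^ 2 * ‖u 0‖ ^ 2 + κ ^ 2 * ∫ t in 0..T, ‖f t‖ ^ 2) := by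
  set R := ‖ι (u 0)‖ ^ 2 + κ ^ 2 * ‖u 0‖ ^ 2 + κ ^ 2 * ∫ t in 0..T, ‖f t‖ ^ 2
  have hE := hs.energy_estimate hι hT
  have hD := hs.deriv_energy_estimate hT
  have hP := hs.pressure_estimate hι hκ hb hβ.le hT
  have hf : 0 ≤ ∫ t in 0..T, ‖f t‖ ^ 2 :=
    intervalIntegral.integral_nonneg hT fun _ _ => by positivity
  have hPR : β ^ 2 * ∫ t in 0..T, ‖p t‖ ^ 2 ≤ 10 * R := by
    nlinarith [mul_le_mul_of_nonneg_left hD (sq_nonneg κ), sq_nonneg ‖ι (u T)‖,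
      sq_nonneg ‖ι (u 0)‖, mul_nonneg (sq_nonneg κ) (sq_nonneg ‖u T‖),
      mul_nonneg (sq_nonneg κ) (sq_nonneg ‖u 0‖), mul_nonneg (sq_nonneg κ) hf]
  have hp : ∫ t in 0..T, ‖p t‖ ^ 2 ≤ 10 / β ^ 2 * R := by
    rw [div_mul_eq_mul_div, le_div_iff₀ (by positivity), mul_comm]
    exact hPR
  rw [add_mul, one_mul]
  linarith [sq_nonneg ‖ι (u T)‖, mul_nonneg (sq_nonneg κ) (sq_nonneg ‖u 0‖)]

end IsStokesSolution

end StokesSolution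

/-- Combined velocity–pressure stability of the continuous transient Stokes
problem. In the abstract transient Stokes setting, if additionally `u` is continuously
differentiable as a map into `(V, ‖·‖_V)`, `t ↦ ‖p(t)‖_Q` is continuous, and the inf-sup
condition `β ‖r‖_Q ≤ sup_{v ≠ 0} |b(r,v)|/‖v‖_V` holds (encoded here via upper bounds `c`
of the sup set), then there is a constant `C > 0` depending only on `β` such that
`‖u(T)‖_H² + ∫_0^T ‖u(t)‖_V² dt + ∫_0^T ‖p(t)‖_Q² dt
  ≤ C [ ‖u(0)‖_H² + (c_P²/ν) ‖u(0)‖_V² + (c_P²/ν) ∫_0^T ‖f(t)‖_H² dt ]`. -/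
theorem continuous_stokes_combined_stability (β : ℝ) (hβ : 0 < β) :
    ∃ C : ℝ, 0 < C ∧
      ∀ (H : Type*) [NormedAddCommGroup H] [InnerProductSpace ℝ H] [CompleteSpace H]
        (V : Submodule ℝ H)
        (a : V →ₗ[ℝ] V →ₗ[ℝ] ℝ),
        (∀ v w : V, a v w = a w v) →
        (∀ v : V, v ≠ 0 → 0 < a v v) →
        ∀ (ν cP : ℝ), 0 < ν → 0 < cP →
        (∀ v : V, ‖(v : H)‖ ≤ cP / Real.sqrt ν * Real.sqrt (a v v)) →
        ∀ (Q : Type*) [instQ : NormedAddCommGroup Q] [instQ2 : NormedSpace ℝ Q]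
          (b : Q →ₗ[ℝ] V →ₗ[ℝ] ℝ) (Cb : ℝ),
        (∀ (r : Q) (v : V), |b r v| ≤ Cb * ‖r‖ * Real.sqrt (a v v)) →
        -- inf-sup condition with constant β
        (∀ r : Q, ∀ c : ℝ,
          (∀ v : V, v ≠ 0 → |b r v| / Real.sqrt (a v v) ≤ c) → β * ‖r‖ ≤ c) →
        ∀ (T : ℝ), 0 ≤ T →
        ∀ (u : ℝ → V) (p : ℝ → Q) (f : ℝ → H) (u' : ℝ → H),
        (∀ t ∈ Set.Icc (0 : ℝ) T,
          HasDerivWithinAt (fun s => (u s : H)) (u' t) (Set.Icc (0 : ℝ) T) t) →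
        ContinuousOn u' (Set.Icc (0 : ℝ) T) →
        ContinuousOn (fun t => a (u t) (u t)) (Set.Icc (0 : ℝ) T) →
        ContinuousOn f (Set.Icc (0 : ℝ) T) →
        (∀ t ∈ Set.Icc (0 : ℝ) T,
          (∀ v : V, ⟪u' t, (v : H)⟫ + a (u t) v + b (p t) v = ⟪f t, (v : H)⟫) ∧
          (∀ r : Q, b r (u t) = 0)) →
        -- additionally `u` is continuously differentiable as a map into `(V, ‖·‖_V)`
        ∀ (uV' : ℝ → V),
        (∀ t ∈ Set.Icc (0 : ℝ) T, (uV' t : H) = u' t) →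
        (∀ t ∈ Set.Icc (0 : ℝ) T,
          Filter.Tendsto
            (fun s : ℝ => Real.sqrt
              (a ((s - t)⁻¹ • (u s - u t) - uV' t) ((s - t)⁻¹ • (u s - u t) - uV' t)))
            (nhdsWithin t (Set.Icc (0 : ℝ) T \ {t})) (nhds 0)) →
        (∀ t ∈ Set.Icc (0 : ℝ) T,
          Filter.Tendsto (fun s : ℝ => Real.sqrt (a (uV' s - uV' t) (uV' s - uV' t)))
            (nhdsWithin t (Set.Icc (0 : ℝ) T)) (nhds 0)) →
        -- `t ↦ ‖p(t)‖_Q` is continuous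
        ContinuousOn (fun t => ‖p t‖) (Set.Icc (0 : ℝ) T) →
        ‖(u T : H)‖ ^ 2 + (∫ t in (0 : ℝ)..T, a (u t) (u t))
            + (∫ t in (0 : ℝ)..T, ‖p t‖ ^ 2)
          ≤ C * (‖(u 0 : H)‖ ^ 2 + cP ^ 2 / ν * a (u 0) (u 0)
              + cP ^ 2 / ν * ∫ t in (0 : ℝ)..T, ‖f t‖ ^ 2) := by
  refine ⟨1 + 10 / β ^ 2, by positivity, ?_⟩
  intro H _ _ _ V a hsymm hpos ν cP hν hcP hpoin Q _ _ b Cb hb hinfsup T hT u p f u' _ _ _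
    hfcont heq uV' huV'eq hVdiff hVcont hpcont
  let c := a.innerCore hsymm hpos
  let e := CoreSpace.equiv c
  let ι : CoreSpace c →L[ℝ] H :=
    (V.subtype ∘ₗ e.toLinearMap).mkContinuous (cP / √ν) fun w => hpoin (e w)
  let bW : Q →L[ℝ] CoreSpace c →L[ℝ] ℝ :=
    (b.compl₂ e.toLinearMap).mkContinuous₂ Cb fun r w => hb r (e w)
  have hsol : IsStokesSolution ι bW T (fun t => e.symm (u t)) (fun t => e.symm (uV' t)) p f :=
    { hasDerivWithinAt := fun t ht => CoreSpace.hasDerivWithinAt_symm_equiv_iff.2 (hVdiff t ht)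
      continuousOn_deriv := fun t ht => CoreSpace.tendsto_symm_equiv_iff.2 (hVcont t ht)
      continuousOn_forcing := hfcont
      continuousOn_norm_pressure := hpcont
      momentum := fun t ht v => by
        have h := (heq t ht).1 (e v)
        rw [← huV'eq t ht] at h
        exact h
      incompressible := fun t ht r => (heq t ht).2 r }
  -- the operator norm of `bW r` is the supremum in the inf-sup condition
  have hinf : ∀ r, β * ‖r‖ ≤ ‖bW r‖ := fun r => hinfsup r _ fun v _ =>
    div_le_of_le_mul₀ (Real.sqrt_nonneg _) (norm_nonneg (bW r)) ((bW r).le_opNorm (e.symm v))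
  have := hsol.stability (fun w => hpoin (e w)) (by positivity) hinf hβ hT
  simp only [e, CoreSpace.norm_symm_equiv_sq, div_pow, Real.sq_sqrt hν.le] at this
  exact this
end

section
/- (Consistency error of the BDF-q derivative.) Let q ≥ 1 be an integer and δ_0, …, δ_q the BDF-q coefficients. There exists a constant C > 0 depending only on q such that for every real Hilbert space H, every τ > 0, every t ∈ ℝ, and every function u : ℝ → H that is (q+1)-times continuously differentiable on [t − qτ, t], one has ‖ (1/τ) ∑_{i=0}^q δ_i u(t − iτ) − u′(t) ‖_H ≤ C τ^{q − 1/2} ( ∫_{t − qτ}^{t} ‖u^{(q+1)}(s)‖_H² ds )^{1/2}. -/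
open Finset

namespace Polynomial

variable {R : Type*}

section

variable [CommSemiring R]

noncomputable def eulerOp (p : R[X]) : R[X] := X * derivative p

theorem coeff_eulerOp (p : R[X]) (i : ℕ) : (eulerOp p).coeff i = i * p.coeff i := by
  cases i with
  | zero => simp [eulerOp]
  | succ n => simp [eulerOp, coeff_X_mul, coeff_derivative, mul_comm]

theorem coeff_eulerOp_iterate (p : R[X]) (k i : ℕ) :
    (eulerOp^[k] p).coeff i = (i : R) ^ k * p.coeff i := by
  induction k with
  | zero => simp
  | succ k ih => rw [Function.iterate_succ_apply', coeff_eulerOp, ih, pow_succ']; ring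

theorem eval_one_eulerOp_iterate {p : R[X]} {n : ℕ} (hp : p.natDegree ≤ n)
    (k : ℕ) : (eulerOp^[k] p).eval 1 = ∑ i ∈ range (n + 1), p.coeff i * (i : R) ^ k := by
  have hdeg : (eulerOp^[k] p).natDegree < n + 1 := by
    refine Nat.lt_succ_of_le (natDegree_le_iff_coeff_eq_zero.mpr fun i hi => ?_)
    rw [coeff_eulerOp_iterate, coeff_eq_zero_of_natDegree_lt (hp.trans_lt hi), mul_zero]
  simp [eval_eq_sum_range' hdeg, coeff_eulerOp_iterate, mul_comm]

end

section

variable [CommRing R]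

theorem one_sub_X_pow_dvd_eulerOp {m : ℕ} {p : R[X]} (hp : (1 - X) ^ (m + 1) ∣ p) :
    (1 - X) ^ m ∣ eulerOp p := by
  obtain ⟨r, rfl⟩ := hp
  refine ⟨X * ((1 - X) * derivative r - ((m : R[X]) + 1) * r), ?_⟩
  simp only [eulerOp, derivative_mul, derivative_pow, derivative_sub, derivative_one,
    derivative_X, Nat.add_sub_cancel, Nat.cast_add, Nat.cast_one, map_add, map_one, map_natCast]
  ring

theorem one_sub_X_pow_dvd_eulerOp_iterate {m : ℕ} (j : ℕ) {p : R[X]}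
    (hp : (1 - X) ^ (m + j) ∣ p) : (1 - X) ^ m ∣ eulerOp^[j] p := by
  induction j generalizing p with
  | zero => simpa using hp
  | succ j ih =>
    rw [Function.iterate_succ_apply]
    exact ih (one_sub_X_pow_dvd_eulerOp (by rwa [← add_assoc] at hp))

end

end Polynomial

open Set MeasureTheory Nat

theorem iteratedDerivWithin_subset {𝕜 F : Type*} [NontriviallyNormedField 𝕜]
    [NormedAddCommGroup F] [NormedSpace 𝕜 F] {f : 𝕜 → F} {s t : Set 𝕜} {x : 𝕜} {n : ℕ} (st : s ⊆ t)
    (hs : UniqueDiffOn 𝕜 s) (ht : UniqueDiffOn 𝕜 t) (hf : ContDiffOn 𝕜 n f t) (hx : x ∈ s) :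
    iteratedDerivWithin n f s x = iteratedDerivWithin n f t x := by
  simp only [iteratedDerivWithin_eq_iteratedFDerivWithin,
    iteratedFDerivWithin_subset st hs ht hf hx]

theorem intervalIntegral.integral_norm_le_sqrt_mul_sqrt_integral_sq {E : Type*}
    [NormedAddCommGroup E] {v : ℝ → E} {a b : ℝ} (hab : a ≤ b) (hv : ContinuousOn v (Icc a b)) :
    ∫ s in a..b, ‖v s‖ ≤ √(b - a) * √(∫ s in a..b, ‖v s‖ ^ 2) := by
  have hv2 : MemLp v (ENNReal.ofReal 2) (volume.restrict (Ioc a b)) := by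
    rw [ENNReal.ofReal_ofNat, memLp_two_iff_integrable_sq_norm
      ((hv.mono Ioc_subset_Icc_self).aestronglyMeasurable measurableSet_Ioc)]
    exact ((hv.norm.pow 2).integrableOn_Icc).mono_set Ioc_subset_Icc_self
  have hholder := integral_mul_norm_le_Lp_mul_Lq (g := fun _ => (1 : ℝ))
    Real.HolderConjugate.two_two hv2.norm (memLp_const 1)
  simp only [norm_norm, norm_one, mul_one, one_pow, setIntegral_const,
    Real.volume_real_Ioc_of_le hab, smul_eq_mul, Real.rpow_two] at hholder
  rw [intervalIntegral.integral_of_le hab, intervalIntegral.integral_of_le hab, mul_comm,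
    Real.sqrt_eq_rpow, Real.sqrt_eq_rpow]
  exact hholder

section

variable {E : Type*} [NormedAddCommGroup E] [NormedSpace ℝ E]

theorem taylorWithinEval_subset {f : ℝ → E} {s t : Set ℝ} {x₀ : ℝ} {n : ℕ} (st : s ⊆ t)
    (hs : UniqueDiffOn ℝ s) (ht : UniqueDiffOn ℝ t) (hf : ContDiffOn ℝ n f t) (hx₀ : x₀ ∈ s)
    (x : ℝ) : taylorWithinEval f n s x₀ x = taylorWithinEval f n t x₀ x := by
  simp only [taylor_within_apply]
  refine sum_congr rfl fun k hk => ?_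
  have hkn : (k : WithTop ℕ∞) ≤ n := by
    exact_mod_cast Nat.lt_succ_iff.mp (Finset.mem_range.mp hk)
  rw [iteratedDerivWithin_subset st hs ht (hf.of_le hkn) hx₀]

theorem sub_taylorWithinEval_Icc_eq_integral [CompleteSpace E] {f : ℝ → E} {a b x : ℝ} {n : ℕ}
    (hab : a < b) (hf : ContDiffOn ℝ (n + 1 : ℕ) f (Icc a b)) (hx : x ∈ Icc a b) :
    f x - taylorWithinEval f n (Icc a b) b x =
      -∫ s in x..b, ((x - s) ^ n / n !) • iteratedDerivWithin (n + 1) f (Icc a b) s := by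
  rcases hx.2.eq_or_lt with rfl | hxb
  · simp [taylorWithinEval_self]
  have hsub : uIcc b x ⊆ Icc a b := by
    rw [uIcc_of_ge hx.2]; exact Icc_subset_Icc_left hx.1
  have hsmall : UniqueDiffOn ℝ (uIcc b x) := uniqueDiffOn_uIcc hxb.ne'
  rw [← taylorWithinEval_subset hsub hsmall (uniqueDiffOn_Icc hab) (hf.of_le (by simp))
      (by simp), taylor_integral_remainder (hf.mono hsub), intervalIntegral.integral_symm]
  refine congrArg _ (intervalIntegral.integral_congr fun s hs => ?_)
  rw [iteratedDerivWithin_subset hsub hsmall (uniqueDiffOn_Icc hab) hf (uIcc_comm b x ▸ hs)]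

theorem norm_sub_taylorWithinEval_Icc_le [CompleteSpace E] {f : ℝ → E} {a b x : ℝ} {n : ℕ}
    (hab : a < b) (hf : ContDiffOn ℝ (n + 1 : ℕ) f (Icc a b)) (hx : x ∈ Icc a b) :
    ‖f x - taylorWithinEval f n (Icc a b) b x‖ ≤
      (b - a) ^ n / n ! * ∫ s in a..b, ‖iteratedDerivWithin (n + 1) f (Icc a b) s‖ := by
  rw [sub_taylorWithinEval_Icc_eq_integral hab hf hx, norm_neg]
  set v := iteratedDerivWithin (n + 1) f (Icc a b)
  have hba : 0 ≤ b - a := by linarith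
  have hvint : IntervalIntegrable (fun s => ‖v s‖) volume a b :=
    ((hf.continuousOn_iteratedDerivWithin le_rfl (uniqueDiffOn_Icc hab)).norm.mono
      (by rw [uIcc_of_le hab.le])).intervalIntegrable
  have hkernel : ∀ s ∈ Ioc x b, ‖((x - s) ^ n / n !) • v s‖ ≤ (b - a) ^ n / n ! * ‖v s‖ := by
    intro s hs
    rw [norm_smul, norm_div, norm_pow, Real.norm_eq_abs, abs_sub_comm,
      abs_of_nonneg (by linarith [hs.1] : 0 ≤ s - x), RCLike.norm_natCast]
    gcongr <;> linarith [hs.1, hs.2, hx.1]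
  calc ‖∫ s in x..b, ((x - s) ^ n / n !) • v s‖
      ≤ ∫ s in x..b, (b - a) ^ n / n ! * ‖v s‖ :=
        intervalIntegral.norm_integral_le_of_norm_le hx.2 (ae_of_all _ hkernel)
          ((hvint.mono_set (uIcc_subset_uIcc_right (Icc_subset_uIcc hx))).const_mul _)
    _ ≤ ∫ s in a..b, (b - a) ^ n / n ! * ‖v s‖ :=
        intervalIntegral.integral_mono_interval hx.1 hx.2 le_rfl
          (ae_of_all _ fun s => mul_nonneg (by positivity) (norm_nonneg _))
          (hvint.const_mul _)
    _ = (b - a) ^ n / n ! * ∫ s in a..b, ‖v s‖ := intervalIntegral.integral_const_mul _ _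

open Polynomial

noncomputable def bdfPoly (q : ℕ) : ℝ[X] := ∑ l ∈ Icc 1 q, C ((l : ℝ)⁻¹) * (1 - X) ^ l

theorem bdfCoeff_eq_coeff_bdfPoly (q i : ℕ) : bdfCoeff q i = (bdfPoly q).coeff i := rfl

theorem natDegree_bdfPoly_le (q : ℕ) : (bdfPoly q).natDegree ≤ q := by
  refine natDegree_sum_le_of_forall_le _ _ fun l hl => ?_
  have h1 : (1 - X : ℝ[X]).natDegree ≤ 1 := (natDegree_sub_le _ _).trans (by simp)
  calc (C ((l : ℝ)⁻¹) * (1 - X) ^ l).natDegree ≤ l * 1 :=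
        (natDegree_C_mul_le _ _).trans (natDegree_pow_le_of_le l h1)
    _ ≤ q := by simpa using (mem_Icc.mp hl).2

theorem eval_one_bdfPoly (q : ℕ) : (bdfPoly q).eval 1 = 0 := by
  simp only [bdfPoly, eval_finsetSum, eval_mul, eval_C, eval_pow, eval_sub, eval_one, eval_X]
  exact sum_eq_zero fun l hl => by simp [zero_pow (by grind : l ≠ 0)]

theorem eulerOp_bdfPoly (q : ℕ) : eulerOp (bdfPoly q) = (1 - X) ^ q - 1 := by
  induction q with
  | zero => simp [bdfPoly, eulerOp]
  | succ q ih =>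
    rw [bdfPoly, sum_Icc_succ_top (by omega), ← bdfPoly]
    simp only [eulerOp, derivative_add] at *
    rw [mul_add, ih, derivative_C_mul, derivative_pow]
    have hcancel : C ((q + 1 : ℕ) : ℝ)⁻¹ * C ((q + 1 : ℕ) : ℝ) = 1 := by
      rw [← C_mul, inv_mul_cancel₀ (by positivity), C_1]
    simp only [Nat.add_sub_cancel, derivative_sub, derivative_one, derivative_X]
    linear_combination (-X * (1 - X) ^ q) * hcancel

theorem sum_bdfCoeff_mul_pow {q k : ℕ} (hq : 1 ≤ q) (hk : k ≤ q) :
    ∑ i ∈ range (q + 1), bdfCoeff q i * (i : ℝ) ^ k = if k = 1 then -1 else 0 := by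
  simp only [bdfCoeff_eq_coeff_bdfPoly]
  rw [← eval_one_eulerOp_iterate (natDegree_bdfPoly_le q)]
  match k with
  | 0 => simp [eval_one_bdfPoly]
  | 1 => simp [eulerOp_bdfPoly, zero_pow (by omega : q ≠ 0)]
  | j + 2 =>
    obtain ⟨r, hr⟩ : (1 - X) ^ 1 ∣ eulerOp^[j + 1] ((1 - X : ℝ[X]) ^ q) :=
      one_sub_X_pow_dvd_eulerOp_iterate (j + 1) (pow_dvd_pow _ (by omega))
    have hconst : eulerOp ((1 - X : ℝ[X]) ^ q - 1) = eulerOp ((1 - X) ^ q) := by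
      simp [eulerOp]
    rw [Function.iterate_succ_apply, eulerOp_bdfPoly, Function.iterate_succ_apply, hconst,
      ← Function.iterate_succ_apply, hr]
    simp

theorem sum_abs_bdfCoeff_pos {q : ℕ} (hq : 1 ≤ q) :
    0 < ∑ i ∈ range (q + 1), |bdfCoeff q i| := by
  obtain ⟨i, hi, hδ⟩ : ∃ i ∈ range (q + 1), bdfCoeff q i ≠ 0 := by
    by_contra! hzero
    have hmoment := sum_bdfCoeff_mul_pow (k := 1) hq hq
    rw [sum_eq_zero fun i hi => by rw [hzero i hi, zero_mul]] at hmoment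
    norm_num at hmoment
  exact sum_pos' (fun j _ => abs_nonneg _) ⟨i, hi, abs_pos.mpr hδ⟩

theorem sum_bdfCoeff_smul_taylorWithinEval {q : ℕ} (hq : 1 ≤ q) (f : ℝ → E) (s : Set ℝ)
    (t τ : ℝ) :
    ∑ i ∈ range (q + 1), bdfCoeff q i • taylorWithinEval f q s t (t - i * τ) =
      τ • derivWithin f s t := by
  have hmoment : ∀ k ∈ range (q + 1),
      ∑ i ∈ range (q + 1), bdfCoeff q i * ((k ! : ℝ)⁻¹ * (t - i * τ - t) ^ k) =
        if k = 1 then τ else 0 := by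
    intro k hk
    have hscale : ∀ i : ℕ, bdfCoeff q i * ((k ! : ℝ)⁻¹ * (t - i * τ - t) ^ k) =
        (k ! : ℝ)⁻¹ * (-τ) ^ k * (bdfCoeff q i * (i : ℝ) ^ k) := fun i => by ring
    simp only [hscale, ← mul_sum,
      sum_bdfCoeff_mul_pow hq (Nat.lt_succ_iff.mp (Finset.mem_range.mp hk))]
    split_ifs with hk1 <;> simp [hk1]
  simp only [taylor_within_apply, smul_sum, smul_smul]
  rw [sum_comm]
  simp only [← sum_smul]
  rw [sum_congr rfl fun k hk => by rw [hmoment k hk, ite_smul, zero_smul]]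
  rw [sum_ite_eq' _ 1 fun k => τ • iteratedDerivWithin k f s t,
    if_pos (Finset.mem_range.mpr (by omega)), iteratedDerivWithin_one]

theorem norm_bdf_error_le [CompleteSpace E] {q : ℕ} (hq : 1 ≤ q) {τ t : ℝ} (hτ : 0 < τ)
    {u : ℝ → E} (hu : ContDiffOn ℝ (q + 1 : ℕ) u (Icc (t - q * τ) t)) :
    ‖τ⁻¹ • ∑ i ∈ range (q + 1), bdfCoeff q i • u (t - i * τ) -
        derivWithin u (Icc (t - q * τ) t) t‖ ≤
      τ⁻¹ * (∑ i ∈ range (q + 1), |bdfCoeff q i|) * ((q * τ) ^ q / q ! *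
        ∫ s in (t - q * τ)..t, ‖iteratedDerivWithin (q + 1) u (Icc (t - q * τ) t) s‖) := by
  set I := Icc (t - q * τ) t
  set P := taylorWithinEval u q I t
  set R := (q * τ) ^ q / q ! * ∫ s in (t - q * τ)..t, ‖iteratedDerivWithin (q + 1) u I s‖
  have hrem : ∀ i ∈ range (q + 1), ‖u (t - i * τ) - P (t - i * τ)‖ ≤ R := by
    intro i hi
    have hiq : (i : ℝ) ≤ q := by exact_mod_cast Nat.lt_succ_iff.mp (Finset.mem_range.mp hi)
    have hq' : (1 : ℝ) ≤ q := by exact_mod_cast hq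
    have hmem : t - i * τ ∈ I := ⟨by nlinarith, by nlinarith⟩
    simpa [R, sub_sub_cancel] using norm_sub_taylorWithinEval_Icc_le (by nlinarith) hu hmem
  have hderiv : derivWithin u I t = τ⁻¹ • ∑ i ∈ range (q + 1), bdfCoeff q i • P (t - i * τ) := by
    rw [sum_bdfCoeff_smul_taylorWithinEval hq, inv_smul_smul₀ hτ.ne']
  rw [hderiv, ← smul_sub, ← sum_sub_distrib, norm_smul,
    Real.norm_of_nonneg (inv_nonneg.mpr hτ.le), mul_assoc]
  gcongr
  calc ‖∑ i ∈ range (q + 1), (bdfCoeff q i • u (t - i * τ) - bdfCoeff q i • P (t - i * τ))‖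
      ≤ ∑ i ∈ range (q + 1), |bdfCoeff q i| * R := by
        refine (norm_sum_le _ _).trans (sum_le_sum fun i hi => ?_)
        rw [← smul_sub, norm_smul, Real.norm_eq_abs]
        exact mul_le_mul_of_nonneg_left (hrem i hi) (abs_nonneg _)
    _ = (∑ i ∈ range (q + 1), |bdfCoeff q i|) * R := (sum_mul ..).symm

end

/-- Consistency error of the BDF-q derivative. For every `q ≥ 1` there is a
constant `C > 0` depending only on `q` such that for every real Hilbert space `H`, every
`τ > 0`, `t ∈ ℝ` and every function `u : ℝ → H` that is `(q+1)`-times continuously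
differentiable on `[t − qτ, t]`:
`‖(1/τ) ∑_{i=0}^q δ_i u(t − iτ) − u′(t)‖_H
  ≤ C τ^{q − 1/2} (∫_{t−qτ}^t ‖u^{(q+1)}(s)‖_H² ds)^{1/2}`. -/
theorem bdf_consistency_error (q : ℕ) (hq : 1 ≤ q) :
    ∃ C : ℝ, 0 < C ∧
      ∀ (H : Type*) [NormedAddCommGroup H] [InnerProductSpace ℝ H] [CompleteSpace H]
        (τ : ℝ), 0 < τ → ∀ (t : ℝ) (u : ℝ → H),
        ContDiffOn ℝ (q + 1 : ℕ) u (Set.Icc (t - (q : ℝ) * τ) t) →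
        ‖τ⁻¹ • (∑ i ∈ Finset.range (q + 1), bdfCoeff q i • u (t - (i : ℝ) * τ))
            - derivWithin u (Set.Icc (t - (q : ℝ) * τ) t) t‖
          ≤ C * τ ^ ((q : ℝ) - 1 / 2) *
            Real.sqrt (∫ s in (t - (q : ℝ) * τ)..t,
              ‖iteratedDerivWithin (q + 1) u (Set.Icc (t - (q : ℝ) * τ) t) s‖ ^ 2) := by
  have hA := sum_abs_bdfCoeff_pos hq
  have hq' : (0 : ℝ) < q := by exact_mod_cast hq
  refine ⟨(∑ i ∈ range (q + 1), |bdfCoeff q i|) * q ^ q * √q / q !, by positivity, ?_⟩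
  intro H _ _ _ τ hτ t u hu
  set v := iteratedDerivWithin (q + 1) u (Icc (t - q * τ) t)
  have hqτ : 0 < (q : ℝ) * τ := mul_pos hq' hτ
  have hv : ContinuousOn v (Icc (t - q * τ) t) :=
    hu.continuousOn_iteratedDerivWithin le_rfl (uniqueDiffOn_Icc (by linarith))
  have hCS := intervalIntegral.integral_norm_le_sqrt_mul_sqrt_integral_sq (by linarith) hv
  rw [sub_sub_cancel] at hCS
  have hscale : τ ^ ((q : ℝ) - 1 / 2) * √τ = τ ^ q := by
    rw [Real.sqrt_eq_rpow, ← Real.rpow_add hτ, sub_add_cancel, Real.rpow_natCast]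
  calc _ ≤ τ⁻¹ * (∑ i ∈ range (q + 1), |bdfCoeff q i|) * ((q * τ) ^ q / q ! *
          ∫ s in (t - q * τ)..t, ‖v s‖) := norm_bdf_error_le hq hτ hu
    _ ≤ τ⁻¹ * (∑ i ∈ range (q + 1), |bdfCoeff q i|) * ((q * τ) ^ q / q ! *
          (√(q * τ) * √(∫ s in (t - q * τ)..t, ‖v s‖ ^ 2))) := by gcongr
    _ = _ := by
      rw [Real.sqrt_mul hq'.le, mul_pow, ← hscale]
      field_simp
      rw [Real.sq_sqrt hτ.le]
end
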